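/- arXiv:1710.02501 — 2 statements merged into one kernel-verified Lean document; each statement's English description precedes it below -/
import Mathlib

section
/- Let r ≥ 2 and let (P,ℒ) be an r-uniform linear system with |ℒ| > ν₂ and 2-packing number ν₂ = 4. Then (r+1)·τ ≤ |P| + |ℒ| (equivalently, τ ≤ (|P| + |ℒ|)/(r+1)), where τ is the transversal number. -/
open Finset

/-- `(P, L)` is a linear system: lines are nonempty subsets of the point set `P`,
and any two distinct lines share at most one point. -/
def IsLinearSystem {α : Type*} [DecidableEq α] (P : Finset α) (L : Finset (Finset α)) : Prop :=
  (∀ l ∈ L, l.Nonempty) ∧ (∀ l ∈ L, l ⊆ P) ∧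
    ∀ l ∈ L, ∀ l' ∈ L, l ≠ l' → (l ∩ l').card ≤ 1

/-- `T` is a transversal of the linear system `(P, L)`. -/
def IsTransversal {α : Type*} [DecidableEq α] (P : Finset α) (L : Finset (Finset α))
    (T : Finset α) : Prop :=
  T ⊆ P ∧ ∀ l ∈ L, (T ∩ l).Nonempty

/-- The transversal number `τ` of `(P, L)`. -/
noncomputable def tau {α : Type*} [DecidableEq α] (P : Finset α) (L : Finset (Finset α)) : ℕ :=
  sInf {n | ∃ T : Finset α, IsTransversal P L T ∧ T.card = n}

/-- `R` is a 2-packing of `L`: no three distinct lines of `R` have a common point. -/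
def Is2Packing {α : Type*} [DecidableEq α] (L R : Finset (Finset α)) : Prop :=
  R ⊆ L ∧ ∀ l₁ ∈ R, ∀ l₂ ∈ R, ∀ l₃ ∈ R,
    l₁ ≠ l₂ → l₁ ≠ l₃ → l₂ ≠ l₃ → l₁ ∩ l₂ ∩ l₃ = ∅

/-- The 2-packing number `ν₂` of `(P, L)`. -/
noncomputable def nu2 {α : Type*} [DecidableEq α] (L : Finset (Finset α)) : ℕ :=
  sSup {n | ∃ R : Finset (Finset α), Is2Packing L R ∧ R.card = n}

/-- The degree of a point `p`: the number of lines containing `p`. -/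
def degree {α : Type*} [DecidableEq α] (L : Finset (Finset α)) (p : α) : ℕ :=
  (L.filter fun l => p ∈ l).card

/-- The maximum degree `Δ` over all points of `P`. -/
def maxDegree {α : Type*} [DecidableEq α] (P : Finset α) (L : Finset (Finset α)) : ℕ :=
  P.sup (degree L)

/-!
Fix a maximum 2-packing `R = {A, B, C, D}`: among any five lines, three are concurrent. Applied to
`R` and one more line `t`, this shows that `t` passes through one of the (at most six) double
points `X ∩ Y` of `R`; `t` is full if it also passes through the opposite double point `Z ∩ W`, and
single otherwise. Applied to other quintuples, it forces concurrences: an `XY`-single and an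
`XZ`-single line meet on `W`, a single line and two full lines of the other two classes are
concurrent, and so on. A case analysis on the pairs that carry single lines (inside a star, a
triangle, one opposite pair, or containing a path of three pairs) then yields a transversal of at
most three points, or of four points together with enough lines and points outside the packing.

The count uses `|P| ≥ 4r - d + (points off the packing)` and `|L| ≥ 4 + (lines outside R)`, where
`d ≤ 6` is the number of double points, and `2d < 4r` as soon as some point of the packing is not
double.
-/

section

variable {α : Type*} [DecidableEq α]

section LinearFamily

variable {L : Finset (Finset α)}

theorem eq_of_mem_inter_of_pairwise (hL : (L : Set (Finset α)).Pairwise fun x y => #(x ∩ y) ≤ 1)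
    {x y : Finset α} (hx : x ∈ L) (hy : y ∈ L) (hxy : x ≠ y) {p q : α} (hp : p ∈ x ∩ y)
    (hq : q ∈ x ∩ y) : p = q :=
  card_le_one.1 (hL hx hy hxy) p hp q hq

theorem tau_le_card {P : Finset α} {T : Finset α} (hT : IsTransversal P L T) : tau P L ≤ #T :=
  Nat.sInf_le ⟨T, hT, rfl⟩

theorem mul_tau_le_of_isTransversal {L : Finset (Finset α)} {P T : Finset α}
    (hT : IsTransversal P L T) {k r : ℕ} (hk : #T ≤ k) (h : k * (r + 1) ≤ #P + #L) :
    (r + 1) * tau P L ≤ #P + #L :=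
  (Nat.mul_le_mul_left _ ((tau_le_card hT).trans hk)).trans (by rw [mul_comm]; exact h)

theorem tau_le_card_sub_one_of_forall_through {P : Finset α}
    (hL : (L : Set (Finset α)).Pairwise fun x y => #(x ∩ y) ≤ 1) (hne : ∀ ℓ ∈ L, ℓ.Nonempty)
    (hP : ∀ ℓ ∈ L, ℓ ⊆ P) {R : Finset (Finset α)} (hRL : R ⊆ L) {X : Finset α} (hX : X ∈ R)
    (hout : (L \ R).Nonempty) (h : ∀ t ∈ L \ R, ∃ V ∈ R, V ≠ X ∧ (X ∩ V ∩ t).Nonempty) :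
    tau P L ≤ #R - 1 := by
  obtain ⟨t₀, ht₀⟩ := hout
  obtain ⟨a, -⟩ := hne t₀ (mem_sdiff.1 ht₀).1
  have : ∀ V, ∃ q, V ∈ L → q ∈ V ∧ ((X ∩ V).Nonempty → q ∈ X) := by
    intro V
    by_cases hV : V ∈ L
    · by_cases hXV : (X ∩ V).Nonempty
      · obtain ⟨q, hq⟩ := hXV
        exact ⟨q, fun _ => ⟨(mem_inter.1 hq).2, fun _ => (mem_inter.1 hq).1⟩⟩
      · obtain ⟨q, hq⟩ := hne V hV
        exact ⟨q, fun _ => ⟨hq, fun h => absurd h hXV⟩⟩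
    · exact ⟨a, fun h => absurd h hV⟩
  choose q hq using this
  have hqT : ∀ V ∈ R, V ≠ X → q V ∈ (R.erase X).image q := fun V hV hVX =>
    mem_image_of_mem q (mem_erase.2 ⟨hVX, hV⟩)
  refine (tau_le_card (T := (R.erase X).image q) ⟨fun p hp => ?_, fun ℓ hℓ => ?_⟩).trans
    (card_image_le.trans (card_erase_of_mem hX).le)
  · obtain ⟨V, hV, rfl⟩ := mem_image.1 hp
    have hVL := hRL (mem_of_mem_erase hV)
    exact hP V hVL (hq V hVL).1
  by_cases hℓR : ℓ ∈ R
  · by_cases hℓX : ℓ = X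
    · subst hℓX
      obtain ⟨V, hV, hVX, p, hp⟩ := h t₀ ht₀
      exact ⟨q V, mem_inter.2 ⟨hqT V hV hVX, (hq V (hRL hV)).2 ⟨p, (mem_inter.1 hp).1⟩⟩⟩
    · exact ⟨q ℓ, mem_inter.2 ⟨hqT ℓ hℓR hℓX, (hq ℓ hℓ).1⟩⟩
  · obtain ⟨V, hV, hVX, p, hp⟩ := h ℓ (mem_sdiff.2 ⟨hℓ, hℓR⟩)
    simp only [mem_inter] at hp
    have hVL := hRL hV
    have hqX := (hq V hVL).2 ⟨p, mem_inter.2 hp.1⟩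
    have : q V = p := eq_of_mem_inter_of_pairwise hL (hRL hX) hVL hVX.symm
      (mem_inter.2 ⟨hqX, (hq V hVL).1⟩) (mem_inter.2 hp.1)
    exact ⟨q V, mem_inter.2 ⟨hqT V hV hVX, this ▸ hp.2⟩⟩

theorem exists_card_le_one_forall_inter_nonempty
    (hL : (L : Set (Finset α)).Pairwise fun x y => #(x ∩ y) ≤ 1) {z : Finset α} (hz : z ∈ L)
    {K₁ K₂ : Finset α → Prop} (hK : ∀ t, K₁ t ∨ K₂ t → t ∈ L ∧ t ≠ z) {Q₁ Q₂ : Finset α}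
    (hQ₁ : #Q₁ ≤ 1) (hQ₂ : #Q₂ ≤ 1) (h₁ : ∀ t, K₁ t → (Q₁ ∩ t).Nonempty)
    (h₂ : ∀ t, K₂ t → (Q₂ ∩ t).Nonempty) (h : ∀ s t, K₁ s → K₂ t → (z ∩ s ∩ t).Nonempty) :
    ∃ Q ⊆ Q₁ ∪ Q₂ ∪ z, #Q ≤ 1 ∧ ∀ t, K₁ t ∨ K₂ t → (Q ∩ t).Nonempty := by
  by_cases h₁₂ : ∃ s t, K₁ s ∧ K₂ t
  · obtain ⟨s, t, hs, ht⟩ := h₁₂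
    obtain ⟨q, hq⟩ := h s t hs ht
    simp only [mem_inter] at hq
    have hmem : ∀ u, (z ∩ u ∩ t).Nonempty ∨ (z ∩ s ∩ u).Nonempty → q ∈ u := by
      rintro u (⟨p, hp⟩ | ⟨p, hp⟩) <;> simp only [mem_inter] at hp
      · obtain ⟨htL, htz⟩ := hK t (Or.inr ht)
        rw [← eq_of_mem_inter_of_pairwise hL hz htL htz.symm (mem_inter.2 ⟨hp.1.1, hp.2⟩)
          (mem_inter.2 ⟨hq.1.1, hq.2⟩)]
        exact hp.1.2
      · obtain ⟨hsL, hsz⟩ := hK s (Or.inl hs)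
        rw [← eq_of_mem_inter_of_pairwise hL hz hsL hsz.symm (mem_inter.2 hp.1)
          (mem_inter.2 hq.1)]
        exact hp.2
    refine ⟨{q}, singleton_subset_iff.2 (mem_union_right _ hq.1.1), (card_singleton q).le, ?_⟩
    rintro u (hu | hu)
    · exact ⟨q, mem_inter.2 ⟨mem_singleton_self q, hmem u (Or.inl (h u t hu ht))⟩⟩
    · exact ⟨q, mem_inter.2 ⟨mem_singleton_self q, hmem u (Or.inr (h s u hs hu))⟩⟩
  push Not at h₁₂
  by_cases hK₁ : ∃ s, K₁ s
  · obtain ⟨s, hs⟩ := hK₁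
    refine ⟨Q₁, subset_union_left.trans subset_union_left, hQ₁, ?_⟩
    rintro u (hu | hu)
    · exact h₁ u hu
    · exact absurd hu (h₁₂ s u hs)
  · push Not at hK₁
    refine ⟨Q₂, subset_union_right.trans subset_union_left, hQ₂, ?_⟩
    rintro u (hu | hu)
    · exact absurd hu (hK₁ u)
    · exact h₂ u hu

end LinearFamily

section Nu2

theorem bddAbove_card_is2Packing (L : Finset (Finset α)) :
    BddAbove {n | ∃ R : Finset (Finset α), Is2Packing L R ∧ #R = n} :=
  ⟨#L, fun _ ⟨_, hR, hn⟩ => hn ▸ card_le_card hR.1⟩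

theorem card_le_nu2 {L R : Finset (Finset α)} (hR : Is2Packing L R) : #R ≤ nu2 L :=
  le_csSup (bddAbove_card_is2Packing L) ⟨R, hR, rfl⟩

theorem exists_is2Packing_card_eq_nu2 (L : Finset (Finset α)) :
    ∃ R, Is2Packing L R ∧ #R = nu2 L :=
  Nat.sSup_mem (s := {n | ∃ R : Finset (Finset α), Is2Packing L R ∧ #R = n})
    ⟨0, ∅, ⟨empty_subset L, by simp⟩, card_empty⟩ (bddAbove_card_is2Packing L)

end Nu2

theorem Finset.card_five {β : Type*} [DecidableEq β] {a b c d e : β} (hab : a ≠ b) (hac : a ≠ c)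
    (had : a ≠ d) (hae : a ≠ e) (hbc : b ≠ c) (hbd : b ≠ d) (hbe : b ≠ e) (hcd : c ≠ d)
    (hce : c ≠ e) (hde : d ≠ e) : #{a, b, c, d, e} = 5 := by
  rw [card_insert_of_notMem (by simp [*]), card_insert_of_notMem (by simp [*]),
    card_insert_of_notMem (by simp [*]), card_pair hde]

section Quad

variable {β : Type*} [DecidableEq β] {R : Finset β} {a b c d : β}

theorem quad_swap₁₂ (h : R = {a, b, c, d}) : R = {b, a, c, d} := h.trans (insert_comm a b _)

theorem quad_swap₂₃ (h : R = {a, b, c, d}) : R = {a, c, b, d} :=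
  h.trans (congrArg (insert a) (insert_comm b c _))

theorem quad_swap₃₄ (h : R = {a, b, c, d}) : R = {a, b, d, c} :=
  h.trans (congrArg (insert a) (congrArg (insert b) (pair_comm c d)))

end Quad

/-- Read `ab` as "the pair `ab` is present": a set of pairs of `{a, b, c, d}` without two opposite
pairs avoids one of the four points, or is a triangle. -/
theorem star_or_triangle {ab ac ad bc bd cd : Prop} (h₁ : ¬(ab ∧ cd)) (h₂ : ¬(ac ∧ bd))
    (h₃ : ¬(ad ∧ bc)) :
    ¬bc ∧ ¬bd ∧ ¬cd ∨ ¬ac ∧ ¬ad ∧ ¬cd ∨ ¬ab ∧ ¬ad ∧ ¬bd ∨ ¬ab ∧ ¬ac ∧ ¬bc ∨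
      ab ∧ ac ∧ bc ∨ ab ∧ ad ∧ bd ∨ ac ∧ ad ∧ cd ∨ bc ∧ bd ∧ cd := by
  tauto

section DoublePoints

variable {L R : Finset (Finset α)}

def doublePoints (R : Finset (Finset α)) : Finset α :=
  {p ∈ R.biUnion id | 2 ≤ degree R p}

theorem doublePoints_subset : doublePoints R ⊆ R.biUnion id := filter_subset _ _

theorem mem_doublePoints {X Y : Finset α} (hX : X ∈ R) (hY : Y ∈ R) (hXY : X ≠ Y) {p : α}
    (hpX : p ∈ X) (hpY : p ∈ Y) : p ∈ doublePoints R := by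
  refine mem_filter.2 ⟨mem_biUnion.2 ⟨X, hX, hpX⟩, ?_⟩
  have : {X, Y} ⊆ R.filter fun l => p ∈ l := by
    simp [insert_subset_iff, hX, hY, hpX, hpY]
  simpa [degree, card_pair hXY] using card_le_card this

theorem one_le_card_inter_doublePoints {X Y t : Finset α} (hX : X ∈ R) (hY : Y ∈ R)
    (hXY : X ≠ Y) (h : (X ∩ Y ∩ t).Nonempty) : 1 ≤ #(t ∩ doublePoints R) := by
  obtain ⟨p, hp⟩ := h
  simp only [mem_inter] at hp
  exact card_pos.2 ⟨p, mem_inter.2 ⟨hp.2, mem_doublePoints hX hY hXY hp.1.1 hp.1.2⟩⟩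

theorem degree_le_two (hR : Is2Packing L R) (p : α) : degree R p ≤ 2 := by
  by_contra! h
  obtain ⟨a, ha, b, hb, c, hc, hab, hac, hbc⟩ := two_lt_card.1 h
  simp only [mem_filter] at ha hb hc
  have hp : p ∈ a ∩ b ∩ c := by simp [ha.2, hb.2, hc.2]
  simp [hR.2 a ha.1 b hb.1 c hc.1 hab hac hbc] at hp

theorem sum_card_inter_of_is2Packing (hR : Is2Packing L R) {S : Finset α}
    (hSU : S ⊆ R.biUnion id) :
    ∑ X ∈ R, #(S ∩ X) = #S + #(S ∩ doublePoints R) := by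
  set D := doublePoints R
  have h₁ : ∀ p ∈ S \ D, #{X ∈ R | p ∈ X} = 1 := by
    intro p hp
    obtain ⟨hpS, hpD⟩ := mem_sdiff.1 hp
    obtain ⟨X, hX, hpX⟩ := mem_biUnion.1 (hSU hpS)
    have hpos : 0 < #{X ∈ R | p ∈ X} := card_pos.2 ⟨X, mem_filter.2 ⟨hX, hpX⟩⟩
    have : ¬2 ≤ degree R p := fun h => hpD (mem_filter.2 ⟨hSU hpS, h⟩)
    simp only [degree] at this
    omega
  have h₂ : ∀ p ∈ S ∩ D, #{X ∈ R | p ∈ X} = 2 := fun p hp =>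
    le_antisymm (degree_le_two hR p) (mem_filter.1 (mem_inter.1 hp).2).2
  calc ∑ X ∈ R, #(S ∩ X) = ∑ X ∈ R, (#((S \ D) ∩ X) + #((S ∩ D) ∩ X)) := by
        refine sum_congr rfl fun X _ => ?_
        rw [← card_union_of_disjoint ((disjoint_sdiff_inter S D).mono inter_subset_left
          inter_subset_left), ← union_inter_distrib_right, sdiff_union_inter]
    _ = #(S \ D) * 1 + #(S ∩ D) * 2 := by
        rw [sum_add_distrib, sum_card_inter h₁, sum_card_inter h₂]
    _ = #S + #(S ∩ D) := by
        rw [← card_sdiff_add_card_inter S D]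
        ring

theorem card_biUnion_add_card_doublePoints (hR : Is2Packing L R) {r : ℕ}
    (hr : ∀ X ∈ R, #X = r) : #(R.biUnion id) + #(doublePoints R) = #R * r := by
  have h := sum_card_inter_of_is2Packing hR (subset_refl _)
  rw [inter_eq_right.2 doublePoints_subset] at h
  rw [← h, sum_const_nat fun X hX => ?_]
  have hXU : X ⊆ R.biUnion id := subset_biUnion_of_mem id hX
  rw [inter_eq_right.2 hXU, hr X hX]

theorem two_mul_card_doublePoints (hR : Is2Packing L R) :
    2 * #(doublePoints R) = ∑ X ∈ R, #(doublePoints R ∩ X) := by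
  rw [sum_card_inter_of_is2Packing hR doublePoints_subset, inter_self]
  ring

theorem card_inter_doublePoints_add_one_le
    (hL : (L : Set (Finset α)).Pairwise fun x y => #(x ∩ y) ≤ 1) (hR : Is2Packing L R)
    {X : Finset α} (hX : X ∈ R) : #(X ∩ doublePoints R) + 1 ≤ #R := by
  have h := sum_card_inter_of_is2Packing hR (S := X ∩ doublePoints R)
    (inter_subset_left.trans (subset_biUnion_of_mem id hX))
  rw [← add_sum_erase R _ hX, inter_assoc, inter_comm _ X, ← inter_assoc, inter_self,
    inter_assoc, inter_self] at h
  have : ∑ Y ∈ R.erase X, #(X ∩ doublePoints R ∩ Y) ≤ ∑ Y ∈ R.erase X, 1 :=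
    sum_le_sum fun Y hY => (card_le_card (inter_subset_inter_right inter_subset_left)).trans
      (hL (hR.1 hX) (hR.1 (mem_of_mem_erase hY)) (ne_of_mem_erase hY).symm)
  rw [sum_const, card_erase_of_mem hX, smul_eq_mul, mul_one] at this
  have hpos : 0 < #R := card_pos.2 ⟨X, hX⟩
  omega

theorem two_mul_card_doublePoints_add_card_le (hR : Is2Packing L R) {r : ℕ}
    (hr : ∀ X ∈ R, #X = r) :
    2 * #(doublePoints R) + #{X ∈ R | ¬X ⊆ doublePoints R} ≤ #R * r := by
  calc 2 * #(doublePoints R) + #{X ∈ R | ¬X ⊆ doublePoints R}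
      = ∑ X ∈ R, (#(doublePoints R ∩ X) + if ¬X ⊆ doublePoints R then 1 else 0) := by
        rw [two_mul_card_doublePoints hR, card_filter, sum_add_distrib]
    _ ≤ ∑ _X ∈ R, r := sum_le_sum fun X hX => ?_
    _ = #R * r := by rw [sum_const, smul_eq_mul]
  split_ifs with h
  · simpa [hr X hX] using card_le_card (inter_subset_right (s₁ := doublePoints R) (s₂ := X))
  · obtain ⟨w, hwX, hwD⟩ := not_subset.1 h
    have := card_lt_card (ssubset_of_subset_of_ne inter_subset_right
      fun he => hwD (mem_of_mem_inter_left (he ▸ hwX : w ∈ doublePoints R ∩ X)))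
    rw [hr X hX] at this
    omega

end DoublePoints

/-- For a labelling `R = {X, Y, Z, W}`: the line `t` passes through the double point `X ∩ Y` but
not through the opposite one `Z ∩ W`. -/
def IsSingle (X Y Z W t : Finset α) : Prop :=
  (X ∩ Y ∩ t).Nonempty ∧ ¬(Z ∩ W ∩ t).Nonempty

theorem isSingle_comm_left {X Y Z W t : Finset α} : IsSingle X Y Z W t ↔ IsSingle Y X Z W t := by
  rw [IsSingle, IsSingle, inter_comm X Y]

theorem isSingle_comm_right {X Y Z W t : Finset α} :
    IsSingle X Y Z W t ↔ IsSingle X Y W Z t := by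
  rw [IsSingle, IsSingle, inter_comm Z W]

theorem IsSingle.swap_left {X Y Z W t : Finset α} (h : IsSingle X Y Z W t) :
    IsSingle Y X Z W t :=
  isSingle_comm_left.1 h

theorem IsSingle.swap_right {X Y Z W t : Finset α} (h : IsSingle X Y Z W t) :
    IsSingle X Y W Z t :=
  isSingle_comm_right.1 h

structure FourPacking (L R : Finset (Finset α)) : Prop where
  linear : (L : Set (Finset α)).Pairwise fun x y => #(x ∩ y) ≤ 1
  isTwoPacking : Is2Packing L R
  card_eq : #R = 4
  card_le : ∀ S, Is2Packing L S → #S ≤ 4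

namespace FourPacking

variable {L R : Finset (Finset α)} (hS : FourPacking L R)
include hS

theorem subset : R ⊆ L := hS.isTwoPacking.1

theorem exists_concurrent {T : Finset (Finset α)} (hTL : T ⊆ L) (hT : #T = 5) :
    ∃ a ∈ T, ∃ b ∈ T, ∃ c ∈ T, a ≠ b ∧ a ≠ c ∧ b ≠ c ∧ (a ∩ b ∩ c).Nonempty := by
  by_contra! h
  have := hS.card_le T ⟨hTL, h⟩
  omega

theorem exists_mem_three {x₁ x₂ x₃ x₄ x₅ : Finset α} (hL : {x₁, x₂, x₃, x₄, x₅} ⊆ L)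
    (hcard : #{x₁, x₂, x₃, x₄, x₅} = 5) : ∃ p,
      p ∈ x₁ ∧ p ∈ x₂ ∧ p ∈ x₃ ∨ p ∈ x₁ ∧ p ∈ x₂ ∧ p ∈ x₄ ∨ p ∈ x₁ ∧ p ∈ x₂ ∧ p ∈ x₅ ∨
      p ∈ x₁ ∧ p ∈ x₃ ∧ p ∈ x₄ ∨ p ∈ x₁ ∧ p ∈ x₃ ∧ p ∈ x₅ ∨ p ∈ x₁ ∧ p ∈ x₄ ∧ p ∈ x₅ ∨
      p ∈ x₂ ∧ p ∈ x₃ ∧ p ∈ x₄ ∨ p ∈ x₂ ∧ p ∈ x₃ ∧ p ∈ x₅ ∨ p ∈ x₂ ∧ p ∈ x₄ ∧ p ∈ x₅ ∨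
      p ∈ x₃ ∧ p ∈ x₄ ∧ p ∈ x₅ := by
  obtain ⟨a, ha, b, hb, c, hc, hab, hac, hbc, p, hp⟩ := hS.exists_concurrent hL hcard
  obtain ⟨⟨hpa, hpb⟩, hpc⟩ := by simpa only [mem_inter] using hp
  simp only [mem_insert, mem_singleton] at ha hb hc
  refine ⟨p, ?_⟩
  rcases ha with rfl | rfl | rfl | rfl | rfl <;> rcases hb with rfl | rfl | rfl | rfl | rfl <;>
    rcases hc with rfl | rfl | rfl | rfl | rfl <;>
    first | exact absurd rfl hab | exact absurd rfl hac | exact absurd rfl hbc | simp [*]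

theorem exists_mem_three_of_three_of_two {x y : Finset α} (hx : x ∈ L \ R) (hy : y ∈ L \ R)
    (hxy : x ≠ y) {X Y Z : Finset α} (hX : X ∈ R) (hY : Y ∈ R) (hZ : Z ∈ R) (hXY : X ≠ Y)
    (hXZ : X ≠ Z) (hYZ : Y ≠ Z) : ∃ p,
      p ∈ X ∧ p ∈ Y ∧ p ∈ Z ∨ p ∈ X ∧ p ∈ Y ∧ p ∈ x ∨ p ∈ X ∧ p ∈ Y ∧ p ∈ y ∨
      p ∈ X ∧ p ∈ Z ∧ p ∈ x ∨ p ∈ X ∧ p ∈ Z ∧ p ∈ y ∨ p ∈ X ∧ p ∈ x ∧ p ∈ y ∨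
      p ∈ Y ∧ p ∈ Z ∧ p ∈ x ∨ p ∈ Y ∧ p ∈ Z ∧ p ∈ y ∨ p ∈ Y ∧ p ∈ x ∧ p ∈ y ∨
      p ∈ Z ∧ p ∈ x ∧ p ∈ y := by
  rw [mem_sdiff] at hx hy
  refine hS.exists_mem_three ?_ (card_five hXY hXZ (ne_of_mem_of_not_mem hX hx.2)
    (ne_of_mem_of_not_mem hX hy.2) hYZ (ne_of_mem_of_not_mem hY hx.2)
    (ne_of_mem_of_not_mem hY hy.2) (ne_of_mem_of_not_mem hZ hx.2)
    (ne_of_mem_of_not_mem hZ hy.2) hxy)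
  simp only [insert_subset_iff, singleton_subset_iff]
  exact ⟨hS.subset hX, hS.subset hY, hS.subset hZ, hx.1, hy.1⟩

theorem exists_mem_three_of_two_of_three {x y z : Finset α} (hx : x ∈ L \ R) (hy : y ∈ L \ R)
    (hz : z ∈ L \ R) (hxy : x ≠ y) (hxz : x ≠ z) (hyz : y ≠ z) {X Y : Finset α} (hX : X ∈ R)
    (hY : Y ∈ R) (hXY : X ≠ Y) : ∃ p,
      p ∈ X ∧ p ∈ Y ∧ p ∈ x ∨ p ∈ X ∧ p ∈ Y ∧ p ∈ y ∨ p ∈ X ∧ p ∈ Y ∧ p ∈ z ∨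
      p ∈ X ∧ p ∈ x ∧ p ∈ y ∨ p ∈ X ∧ p ∈ x ∧ p ∈ z ∨ p ∈ X ∧ p ∈ y ∧ p ∈ z ∨
      p ∈ Y ∧ p ∈ x ∧ p ∈ y ∨ p ∈ Y ∧ p ∈ x ∧ p ∈ z ∨ p ∈ Y ∧ p ∈ y ∧ p ∈ z ∨
      p ∈ x ∧ p ∈ y ∧ p ∈ z := by
  rw [mem_sdiff] at hx hy hz
  refine hS.exists_mem_three ?_ (card_five hXY (ne_of_mem_of_not_mem hX hx.2)
    (ne_of_mem_of_not_mem hX hy.2) (ne_of_mem_of_not_mem hX hz.2) (ne_of_mem_of_not_mem hY hx.2)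
    (ne_of_mem_of_not_mem hY hy.2) (ne_of_mem_of_not_mem hY hz.2) hxy hxz hyz)
  simp only [insert_subset_iff, singleton_subset_iff]
  exact ⟨hS.subset hX, hS.subset hY, hx.1, hy.1, hz.1⟩

theorem exists_through {t : Finset α} (ht : t ∈ L \ R) :
    ∃ X ∈ R, ∃ Y ∈ R, X ≠ Y ∧ (X ∩ Y ∩ t).Nonempty := by
  rw [mem_sdiff] at ht
  obtain ⟨a, ha, b, hb, c, hc, hab, hac, hbc, habc⟩ := hS.exists_concurrent
    (insert_subset ht.1 hS.subset) (by rw [card_insert_of_notMem ht.2, hS.card_eq])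
  rw [mem_insert] at ha hb hc
  rcases ha with rfl | ha <;> rcases hb with rfl | hb <;> rcases hc with rfl | hc
  · exact absurd rfl hab
  · exact absurd rfl hab
  · exact absurd rfl hac
  · exact ⟨b, hb, c, hc, hbc, by rwa [inter_comm, ← inter_assoc]⟩
  · exact absurd rfl hbc
  · exact ⟨a, ha, c, hc, hac, by rwa [inter_right_comm]⟩
  · exact ⟨a, ha, b, hb, hab, habc⟩
  · exact absurd (hS.isTwoPacking.2 a ha b hb c hc hab hac hbc) habc.ne_empty

theorem mem_iff_mem_of_through {X Y t : Finset α} (ht : t ∈ L \ R) (hX : X ∈ R) (hY : Y ∈ R)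
    (h : (X ∩ Y ∩ t).Nonempty) {p : α} (hp : p ∈ t) : p ∈ X ↔ p ∈ Y := by
  obtain ⟨q, hq⟩ := h
  simp only [mem_inter] at hq
  rw [mem_sdiff] at ht
  have key : ∀ V ∈ R, p ∈ V → q ∈ V → p = q := fun V hV hpV hqV =>
    eq_of_mem_inter_of_pairwise hS.linear ht.1 (hS.subset hV) (fun h => ht.2 (h ▸ hV))
      (mem_inter.2 ⟨hp, hpV⟩) (mem_inter.2 ⟨hq.2, hqV⟩)
  exact ⟨fun hpX => key X hX hpX hq.1.1 ▸ hq.1.2, fun hpY => key Y hY hpY hq.1.2 ▸ hq.1.1⟩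

theorem not_mem_of_mem_of_mem {X Y Z : Finset α} (hX : X ∈ R) (hY : Y ∈ R) (hZ : Z ∈ R)
    (hXY : X ≠ Y) (hXZ : X ≠ Z) (hYZ : Y ≠ Z) {p : α} (hpX : p ∈ X) (hpY : p ∈ Y) : p ∉ Z :=
  fun hpZ => by
    have h := hS.isTwoPacking.2 X hX Y hY Z hZ hXY hXZ hYZ
    have hp : p ∈ X ∩ Y ∩ Z := by simp [hpX, hpY, hpZ]
    simp [h] at hp

theorem not_through_of_through {X Y Z t : Finset α} (ht : t ∈ L \ R) (hX : X ∈ R) (hY : Y ∈ R)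
    (hZ : Z ∈ R) (hXY : X ≠ Y) (hXZ : X ≠ Z) (hYZ : Y ≠ Z) (h : (X ∩ Y ∩ t).Nonempty) :
    ¬(X ∩ Z ∩ t).Nonempty := by
  rintro ⟨q, hq⟩
  simp only [mem_inter] at hq
  exact hS.not_mem_of_mem_of_mem hX hY hZ hXY hXZ hYZ hq.1.1
    ((hS.mem_iff_mem_of_through ht hX hY h hq.2).1 hq.1.1) hq.1.2

theorem card_doublePoints_le : #(doublePoints R) ≤ 6 := by
  have h := two_mul_card_doublePoints hS.isTwoPacking
  have : ∑ X ∈ R, #(doublePoints R ∩ X) ≤ ∑ _X ∈ R, 3 := sum_le_sum fun X hX => by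
    have := card_inter_doublePoints_add_one_le hS.linear hS.isTwoPacking hX
    rw [inter_comm, ← Nat.add_le_add_iff_right (n := 1)]
    exact this.trans hS.card_eq.le
  rw [sum_const, hS.card_eq, smul_eq_mul] at this
  omega

theorem card_inter_biUnion_add_card_inter_doublePoints_le {t : Finset α} (ht : t ∈ L \ R) :
    #(t ∩ R.biUnion id) + #(t ∩ doublePoints R) ≤ 4 := by
  have h := sum_card_inter_of_is2Packing hS.isTwoPacking (S := t ∩ R.biUnion id) inter_subset_right
  rw [inter_assoc, inter_eq_right.2 doublePoints_subset] at h
  have : ∑ X ∈ R, #(t ∩ R.biUnion id ∩ X) ≤ ∑ _X ∈ R, 1 := sum_le_sum fun X hX =>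
    (card_le_card (inter_subset_inter_right inter_subset_left)).trans
      (hS.linear (mem_sdiff.1 ht).1 (hS.subset hX) fun h => (mem_sdiff.1 ht).2 (h ▸ hX))
  rw [sum_const, hS.card_eq, smul_eq_mul] at this
  omega

section Labelled

variable {X Y Z W : Finset α} (hR : R = {X, Y, Z, W})
include hR

theorem pairwise_ne_of_eq : X ≠ Y ∧ X ≠ Z ∧ X ≠ W ∧ Y ≠ Z ∧ Y ≠ W ∧ Z ≠ W := by
  have h4 := hS.card_eq
  rw [hR] at h4
  refine ⟨?_, ?_, ?_, ?_, ?_, ?_⟩ <;> rintro rfl <;> simp at h4 <;>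
    exact absurd h4 (card_le_three.trans_lt (by norm_num)).ne

theorem not_mem_three (p : α) :
    ¬(p ∈ X ∧ p ∈ Y ∧ p ∈ Z) ∧ ¬(p ∈ X ∧ p ∈ Y ∧ p ∈ W) ∧ ¬(p ∈ X ∧ p ∈ Z ∧ p ∈ W) ∧
      ¬(p ∈ Y ∧ p ∈ Z ∧ p ∈ W) := by
  obtain ⟨hXY, hXZ, hXW, hYZ, hYW, hZW⟩ := hS.pairwise_ne_of_eq hR
  have hm : X ∈ R ∧ Y ∈ R ∧ Z ∈ R ∧ W ∈ R := by simp [hR]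
  refine ⟨fun h => ?_, fun h => ?_, fun h => ?_, fun h => ?_⟩
  · exact hS.not_mem_of_mem_of_mem hm.1 hm.2.1 hm.2.2.1 hXY hXZ hYZ h.1 h.2.1 h.2.2
  · exact hS.not_mem_of_mem_of_mem hm.1 hm.2.1 hm.2.2.2 hXY hXW hYW h.1 h.2.1 h.2.2
  · exact hS.not_mem_of_mem_of_mem hm.1 hm.2.2.1 hm.2.2.2 hXZ hXW hZW h.1 h.2.1 h.2.2
  · exact hS.not_mem_of_mem_of_mem hm.2.1 hm.2.2.1 hm.2.2.2 hYZ hYW hZW h.1 h.2.1 h.2.2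

theorem through_cases {t : Finset α} (ht : t ∈ L \ R) :
    (X ∩ Y ∩ t).Nonempty ∨ (Z ∩ W ∩ t).Nonempty ∨ (X ∩ Z ∩ t).Nonempty ∨
      (Y ∩ W ∩ t).Nonempty ∨ (X ∩ W ∩ t).Nonempty ∨ (Y ∩ Z ∩ t).Nonempty := by
  obtain ⟨U, hU, V, hV, hUV, h⟩ := hS.exists_through ht
  rw [hR] at hU hV
  simp only [mem_insert, mem_singleton] at hU hV
  rcases hU with rfl | rfl | rfl | rfl <;> rcases hV with rfl | rfl | rfl | rfl <;>
    first | exact absurd rfl hUV | (simp only [inter_comm] at h ⊢; tauto)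

theorem ne_of_through_of_through {s t : Finset α} (hs : s ∈ L \ R)
    (h₁ : (X ∩ Y ∩ s).Nonempty) (h₂ : (X ∩ Z ∩ t).Nonempty) : s ≠ t := by
  obtain ⟨hXY, hXZ, -, hYZ, -, -⟩ := hS.pairwise_ne_of_eq hR
  rintro rfl
  exact hS.not_through_of_through hs (by simp [hR]) (by simp [hR]) (by simp [hR]) hXY hXZ hYZ h₁ h₂

theorem forall_through_of_not_isSingle (hYZ : ¬∃ t ∈ L \ R, IsSingle Y Z X W t)
    (hYW : ¬∃ t ∈ L \ R, IsSingle Y W X Z t) (hZW : ¬∃ t ∈ L \ R, IsSingle Z W X Y t) :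
    ∀ t ∈ L \ R, ∃ V ∈ R, V ≠ X ∧ (X ∩ V ∩ t).Nonempty := by
  obtain ⟨hXY, hXZ, hXW, -, -, -⟩ := hS.pairwise_ne_of_eq hR
  have hm : Y ∈ R ∧ Z ∈ R ∧ W ∈ R := by simp [hR]
  intro t ht
  rcases hS.through_cases hR ht with h | h | h | h | h | h
  · exact ⟨Y, hm.1, hXY.symm, h⟩
  · by_contra hne
    exact hZW ⟨t, ht, h, fun h' => hne ⟨Y, hm.1, hXY.symm, h'⟩⟩
  · exact ⟨Z, hm.2.1, hXZ.symm, h⟩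
  · by_contra hne
    exact hYW ⟨t, ht, h, fun h' => hne ⟨Z, hm.2.1, hXZ.symm, h'⟩⟩
  · exact ⟨W, hm.2.2, hXW.symm, h⟩
  · by_contra hne
    exact hYZ ⟨t, ht, h, fun h' => hne ⟨W, hm.2.2, hXW.symm, h'⟩⟩

theorem inter_inter_nonempty_of_isSingle {x y : Finset α} (hx : x ∈ L \ R) (hy : y ∈ L \ R)
    (hxs : IsSingle X Y Z W x) (hys : IsSingle X Z Y W y) : (x ∩ y ∩ W).Nonempty := by
  obtain ⟨hXY, hXZ, -, hYZ, hYW, hZW⟩ := hS.pairwise_ne_of_eq hR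
  have hm : X ∈ R ∧ Y ∈ R ∧ Z ∈ R ∧ W ∈ R := by simp [hR]
  have hxy : x ≠ y := by
    rintro rfl
    exact hS.not_through_of_through hx hm.1 hm.2.1 hm.2.2.1 hXY hXZ hYZ hxs.1 hys.1
  -- Three of `Y, Z, W, x, y` pass through a point `p`; the constraints on `p` collected below
  -- rule out every triple except `x, y, W`.
  obtain ⟨p, hp⟩ :=
    hS.exists_mem_three_of_three_of_two hx hy hxy hm.2.1 hm.2.2.1 hm.2.2.2 hYZ hYW hZW
  by_contra hne
  have := hS.not_mem_three hR p
  have hxX := fun h => hS.mem_iff_mem_of_through hx hm.1 hm.2.1 hxs.1 (p := p) h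
  have hyX := fun h => hS.mem_iff_mem_of_through hy hm.1 hm.2.2.1 hys.1 (p := p) h
  have hxZW : ¬(p ∈ Z ∧ p ∈ W ∧ p ∈ x) := fun h => hxs.2 ⟨p, by simp [h]⟩
  have hyYW : ¬(p ∈ Y ∧ p ∈ W ∧ p ∈ y) := fun h => hys.2 ⟨p, by simp [h]⟩
  have hxyW : ¬(p ∈ x ∧ p ∈ y ∧ p ∈ W) := fun h => hne ⟨p, by simp [h]⟩
  grind

theorem mem_of_isSingle_of_mem {x y : Finset α} (hx : x ∈ L \ R) (hy : y ∈ L \ R)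
    (hxs : IsSingle X Y Z W x) (hys : IsSingle X Z Y W y) {w : α} (hwy : w ∈ y) (hwW : w ∈ W) :
    w ∈ x := by
  obtain ⟨p, hp⟩ := hS.inter_inter_nonempty_of_isSingle hR hx hy hxs hys
  simp only [mem_inter] at hp
  have hW : W ∈ R := by simp [hR]
  rw [mem_sdiff] at hy
  rw [← eq_of_mem_inter_of_pairwise hS.linear hy.1 (hS.subset hW) (fun h => hy.2 (h ▸ hW))
    (mem_inter.2 ⟨hp.1.2, hp.2⟩) (mem_inter.2 ⟨hwy, hwW⟩)]
  exact hp.1.1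

theorem not_mem_doublePoints_of_isSingle {x : Finset α} (hx : x ∈ L \ R)
    (hxs : IsSingle X Y Z W x) {w : α} (hwx : w ∈ x) (hwW : w ∈ W) : w ∉ doublePoints R := by
  have hm : X ∈ R ∧ Y ∈ R := by simp [hR]
  have h3 := hS.not_mem_three hR w
  have hXY := hS.mem_iff_mem_of_through hx hm.1 hm.2 hxs.1 hwx
  have hwZ : w ∉ Z := fun h => hxs.2 ⟨w, by simp [h, hwW, hwx]⟩
  have hwX : w ∉ X := fun h => h3.2.1 ⟨h, hXY.1 h, hwW⟩
  have hwY : w ∉ Y := fun h => h3.2.1 ⟨hXY.2 h, h, hwW⟩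
  intro hw
  have := (mem_filter.1 hw).2
  simp [degree, hR, filter_insert, filter_singleton, hwX, hwY, hwZ, hwW] at this

theorem two_le_card_inter_doublePoints {t : Finset α} (h₁ : (X ∩ Y ∩ t).Nonempty)
    (h₂ : (Z ∩ W ∩ t).Nonempty) : 2 ≤ #(t ∩ doublePoints R) := by
  obtain ⟨hXY, -, -, -, -, hZW⟩ := hS.pairwise_ne_of_eq hR
  have hm : X ∈ R ∧ Y ∈ R ∧ Z ∈ R ∧ W ∈ R := by simp [hR]
  obtain ⟨p, hp⟩ := h₁
  obtain ⟨q, hq⟩ := h₂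
  simp only [mem_inter] at hp hq
  refine one_lt_card.2 ⟨p, mem_inter.2 ⟨hp.2, mem_doublePoints hm.1 hm.2.1 hXY hp.1.1 hp.1.2⟩,
    q, mem_inter.2 ⟨hq.2, mem_doublePoints hm.2.2.1 hm.2.2.2 hZW hq.1.1 hq.1.2⟩, ?_⟩
  rintro rfl
  exact (hS.not_mem_three hR p).1 ⟨hp.1.1, hp.1.2, hq.1.1⟩

theorem card_inter_doublePoints_le_one_of_isSingle {t : Finset α} (ht : t ∈ L \ R)
    (hts : IsSingle X Y Z W t) : #(t ∩ doublePoints R) ≤ 1 := by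
  have hm : X ∈ R ∧ Y ∈ R := by simp [hR]
  have hX : ∀ p ∈ t ∩ doublePoints R, p ∈ X := by
    intro p hp
    obtain ⟨hpt, hpD⟩ := mem_inter.1 hp
    obtain ⟨U, hU, V, hV, hUV⟩ := one_lt_card.1 (mem_filter.1 hpD).2
    simp only [mem_filter, hR, mem_insert, mem_singleton] at hU hV
    have := hS.not_mem_three hR p
    have hXY := hS.mem_iff_mem_of_through ht hm.1 hm.2 hts.1 hpt
    have hZW : ¬(p ∈ Z ∧ p ∈ W) := fun h => hts.2 ⟨p, by simp [h, hpt]⟩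
    rcases hU with ⟨rfl | rfl | rfl | rfl, hpU⟩ <;> rcases hV with ⟨rfl | rfl | rfl | rfl, hpV⟩ <;>
      first | exact absurd rfl hUV | tauto
  refine card_le_one.2 fun p hp q hq => ?_
  rw [mem_sdiff] at ht
  exact eq_of_mem_inter_of_pairwise hS.linear ht.1 (hS.subset hm.1) (fun h => ht.2 (h ▸ hm.1))
    (mem_inter.2 ⟨(mem_inter.1 hp).1, hX p hp⟩) (mem_inter.2 ⟨(mem_inter.1 hq).1, hX q hq⟩)

theorem inter_inter_nonempty_of_isSingle_of_full {z s t : Finset α} (hz : z ∈ L \ R)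
    (hs : s ∈ L \ R) (ht : t ∈ L \ R) (hzs : IsSingle X Y Z W z) (hs₁ : (X ∩ Z ∩ s).Nonempty)
    (hs₂ : (Y ∩ W ∩ s).Nonempty) (ht₁ : (X ∩ W ∩ t).Nonempty) (ht₂ : (Y ∩ Z ∩ t).Nonempty) :
    (z ∩ s ∩ t).Nonempty := by
  obtain ⟨hXY, hXZ, hXW, hYZ, hYW, hZW⟩ := hS.pairwise_ne_of_eq hR
  have hm : X ∈ R ∧ Y ∈ R ∧ Z ∈ R ∧ W ∈ R := by simp [hR]
  have hzs' : z ≠ s := by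
    rintro rfl
    exact hS.not_through_of_through hz hm.1 hm.2.1 hm.2.2.1 hXY hXZ hYZ hzs.1 hs₁
  have hzt : z ≠ t := by
    rintro rfl
    exact hS.not_through_of_through hz hm.1 hm.2.1 hm.2.2.2 hXY hXW hYW hzs.1 ht₁
  have hst : s ≠ t := by
    rintro rfl
    exact hS.not_through_of_through hs hm.1 hm.2.2.1 hm.2.2.2 hXZ hXW hZW hs₁ ht₁
  obtain ⟨p, hp⟩ := hS.exists_mem_three_of_two_of_three hz hs ht hzs' hzt hst hm.2.2.1 hm.2.2.2 hZW
  by_contra hne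
  have := hS.not_mem_three hR p
  have hz₁ := fun h => hS.mem_iff_mem_of_through hz hm.1 hm.2.1 hzs.1 (p := p) h
  have hs₁' := fun h => hS.mem_iff_mem_of_through hs hm.1 hm.2.2.1 hs₁ (p := p) h
  have hs₂' := fun h => hS.mem_iff_mem_of_through hs hm.2.1 hm.2.2.2 hs₂ (p := p) h
  have ht₁' := fun h => hS.mem_iff_mem_of_through ht hm.1 hm.2.2.2 ht₁ (p := p) h
  have ht₂' := fun h => hS.mem_iff_mem_of_through ht hm.2.1 hm.2.2.1 ht₂ (p := p) h
  have hzZW : ¬(p ∈ Z ∧ p ∈ W ∧ p ∈ z) := fun h => hzs.2 ⟨p, by simp [h]⟩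
  have hgoal : ¬(p ∈ z ∧ p ∈ s ∧ p ∈ t) := fun h => hne ⟨p, by simp [h]⟩
  grind

theorem inter_inter_nonempty_of_isSingle_of_isSingle {z y s : Finset α} (hz : z ∈ L \ R)
    (hy : y ∈ L \ R) (hs : s ∈ L \ R) (hzs : IsSingle X Y Z W z) (hys : IsSingle Z W X Y y)
    (hs₁ : (X ∩ Z ∩ s).Nonempty) (hs₂ : (Y ∩ W ∩ s).Nonempty) : (z ∩ y ∩ s).Nonempty := by
  obtain ⟨hXY, hXZ, hXW, hYZ, hYW, hZW⟩ := hS.pairwise_ne_of_eq hR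
  have hm : X ∈ R ∧ Y ∈ R ∧ Z ∈ R ∧ W ∈ R := by simp [hR]
  have hzy : z ≠ y := by
    rintro rfl
    exact hzs.2 hys.1
  have hzs' : z ≠ s := by
    rintro rfl
    exact hS.not_through_of_through hz hm.1 hm.2.1 hm.2.2.1 hXY hXZ hYZ hzs.1 hs₁
  have hys' : y ≠ s := by
    rintro rfl
    refine hS.not_through_of_through hy hm.2.2.2 hm.2.2.1 hm.2.1 hZW.symm hYW.symm hYZ.symm
      ?_ ?_
    · rw [inter_comm W Z]
      exact hys.1
    · rw [inter_comm W Y]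
      exact hs₂
  obtain ⟨p, hp⟩ := hS.exists_mem_three_of_two_of_three hz hy hs hzy hzs' hys' hm.1 hm.2.2.2 hXW
  by_contra hne
  have := hS.not_mem_three hR p
  have hz₁ := fun h => hS.mem_iff_mem_of_through hz hm.1 hm.2.1 hzs.1 (p := p) h
  have hy₁ := fun h => hS.mem_iff_mem_of_through hy hm.2.2.1 hm.2.2.2 hys.1 (p := p) h
  have hs₁' := fun h => hS.mem_iff_mem_of_through hs hm.1 hm.2.2.1 hs₁ (p := p) h
  have hs₂' := fun h => hS.mem_iff_mem_of_through hs hm.2.1 hm.2.2.2 hs₂ (p := p) h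
  have hzZW : ¬(p ∈ Z ∧ p ∈ W ∧ p ∈ z) := fun h => hzs.2 ⟨p, by simp [h]⟩
  have hyXY : ¬(p ∈ X ∧ p ∈ Y ∧ p ∈ y) := fun h => hys.2 ⟨p, by simp [h]⟩
  have hgoal : ¬(p ∈ z ∧ p ∈ y ∧ p ∈ s) := fun h => hne ⟨p, by simp [h]⟩
  grind

theorem exists_mem_forall_isSingle {x y : Finset α} (hx : x ∈ L \ R) (hy : y ∈ L \ R)
    (hxs : IsSingle X Y Z W x) (hys : IsSingle X Z Y W y) : ∃ w ∈ W, w ∈ x ∧ w ∈ y ∧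
      ∀ t ∈ L \ R, IsSingle X Y Z W t ∨ IsSingle X Z Y W t ∨ IsSingle Y Z X W t → w ∈ t := by
  obtain ⟨w, hw⟩ := hS.inter_inter_nonempty_of_isSingle hR hx hy hxs hys
  simp only [mem_inter] at hw
  refine ⟨w, hw.2, hw.1.1, hw.1.2, ?_⟩
  rintro t ht (h | h | h)
  · exact hS.mem_of_isSingle_of_mem hR ht hy h hys hw.1.2 hw.2
  · exact hS.mem_of_isSingle_of_mem (quad_swap₂₃ hR) ht hx h hxs hw.1.1 hw.2
  · exact hS.mem_of_isSingle_of_mem (quad_swap₂₃ (quad_swap₁₂ hR)) ht hx h hxs.swap_left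
      hw.1.1 hw.2

theorem exists_card_le_one_forall_full {z : Finset α} (hz : z ∈ L \ R)
    (hzs : IsSingle X Y Z W z) : ∃ Q ⊆ X ∪ z, #Q ≤ 1 ∧ ∀ t ∈ L \ R,
      (X ∩ Z ∩ t).Nonempty ∧ (Y ∩ W ∩ t).Nonempty ∨ (X ∩ W ∩ t).Nonempty ∧ (Y ∩ Z ∩ t).Nonempty →
        (Q ∩ t).Nonempty := by
  have hm : X ∈ R ∧ Z ∈ R ∧ W ∈ R := by simp [hR]
  obtain ⟨-, hXZ, hXW, -, -, -⟩ := hS.pairwise_ne_of_eq hR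
  obtain ⟨Q, hQsub, hQ, hQt⟩ := exists_card_le_one_forall_inter_nonempty hS.linear
    (mem_sdiff.1 hz).1
    (K₁ := fun t => t ∈ L \ R ∧ (X ∩ Z ∩ t).Nonempty ∧ (Y ∩ W ∩ t).Nonempty)
    (K₂ := fun t => t ∈ L \ R ∧ (X ∩ W ∩ t).Nonempty ∧ (Y ∩ Z ∩ t).Nonempty)
    (fun t ht => by
      rcases ht with ht | ht
      · exact ⟨(mem_sdiff.1 ht.1).1, (hS.ne_of_through_of_through hR hz hzs.1 ht.2.1).symm⟩
      · exact ⟨(mem_sdiff.1 ht.1).1,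
          (hS.ne_of_through_of_through (quad_swap₃₄ hR) hz hzs.1 ht.2.1).symm⟩)
    (hS.linear (hS.subset hm.1) (hS.subset hm.2.1) hXZ)
    (hS.linear (hS.subset hm.1) (hS.subset hm.2.2) hXW) (fun t ht => ht.2.1)
    (fun t ht => ht.2.1) fun s t hs ht => hS.inter_inter_nonempty_of_isSingle_of_full hR hz hs.1
      ht.1 hzs hs.2.1 hs.2.2 ht.2.1 ht.2.2
  refine ⟨Q, hQsub.trans (union_subset_union (union_subset inter_subset_left inter_subset_left)
    subset_rfl), hQ, fun t ht h => hQt t (h.imp (⟨ht, ·⟩) (⟨ht, ·⟩))⟩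

theorem exists_card_le_one_forall_inter_nonempty_of_isSingle {z : Finset α} (hz : z ∈ L \ R)
    (hzs : IsSingle X Z Y W z) : ∃ Q ⊆ X ∪ Y ∪ z, #Q ≤ 1 ∧ ∀ t ∈ L \ R,
      IsSingle Y W X Z t ∨ (X ∩ Y ∩ t).Nonempty ∧ (Z ∩ W ∩ t).Nonempty ∨
        (X ∩ W ∩ t).Nonempty ∧ (Y ∩ Z ∩ t).Nonempty → (Q ∩ t).Nonempty := by
  have hm : Y ∈ R ∧ W ∈ R := by simp [hR]
  obtain ⟨Q₁, hQ₁sub, hQ₁, hQ₁t⟩ := hS.exists_card_le_one_forall_full (quad_swap₂₃ hR) hz hzs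
  obtain ⟨Q, hQsub, hQ, hQt⟩ := exists_card_le_one_forall_inter_nonempty hS.linear
    (mem_sdiff.1 hz).1 (K₁ := fun t => t ∈ L \ R ∧ IsSingle Y W X Z t)
    (K₂ := fun t => t ∈ L \ R ∧ ((X ∩ Y ∩ t).Nonempty ∧ (Z ∩ W ∩ t).Nonempty ∨
      (X ∩ W ∩ t).Nonempty ∧ (Y ∩ Z ∩ t).Nonempty))
    (fun t ht => by
      rcases ht with ht | ⟨ht, ⟨h, -⟩ | ⟨h, -⟩⟩
      · exact ⟨(mem_sdiff.1 ht.1).1, fun h => hzs.2 (h ▸ ht.2.1)⟩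
      · exact ⟨(mem_sdiff.1 ht).1, hS.ne_of_through_of_through hR ht h hzs.1⟩
      · exact ⟨(mem_sdiff.1 ht).1,
          hS.ne_of_through_of_through (hR.trans (by ext; simp; tauto) : R = {X, W, Z, Y}) ht h
            hzs.1⟩)
    (hS.linear (hS.subset hm.1) (hS.subset hm.2) (hS.pairwise_ne_of_eq hR).2.2.2.2.1) hQ₁
    (fun t ht => ht.2.1)
    (fun t ht => hQ₁t t ht.1 (by rw [inter_comm Z Y]; exact ht.2))
    fun y s hy ⟨hs, h⟩ => by
      rcases h with h | h
      · exact hS.inter_inter_nonempty_of_isSingle_of_isSingle (quad_swap₂₃ hR) hz hy.1 hs hzs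
          hy.2 h.1 h.2
      · exact hS.inter_inter_nonempty_of_isSingle_of_isSingle (quad_swap₃₄ (quad_swap₂₃ hR)) hz
          hy.1 hs hzs.swap_right hy.2.swap_left h.1 (by rw [inter_comm Z Y]; exact h.2)
  refine ⟨Q, fun p hp => ?_, hQ, fun t ht h => hQt t (h.imp (⟨ht, ·⟩) (⟨ht, ·⟩))⟩
  have h₁ := hQsub hp
  have h₂ : p ∈ Q₁ → p ∈ X ∪ z := fun h => hQ₁sub h
  simp only [mem_union, mem_inter] at h₁ h₂ ⊢
  tauto

end Labelled

section Counting

variable {P : Finset α} {r : ℕ} (hP : ∀ ℓ ∈ L, ℓ ⊆ P) (hr : ∀ ℓ ∈ L, #ℓ = r)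
include hP hr

theorem four_mul_add_card_add_card_le {O : Finset (Finset α)} (hO : O ⊆ L \ R) {F : Finset α}
    (hFP : F ⊆ P) (hFU : Disjoint F (R.biUnion id)) :
    4 * r + #F + 4 + #O ≤ #P + #L + #(doublePoints R) := by
  have hU := card_biUnion_add_card_doublePoints hS.isTwoPacking fun X hX => hr X (hS.subset hX)
  have hn : #(R.biUnion id) + #F ≤ #P := by
    rw [← card_union_of_disjoint hFU.symm]
    exact card_le_card (union_subset (biUnion_subset.2 fun X hX => hP X (hS.subset hX)) hFP)
  have hm : #R + #O ≤ #L := by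
    rw [← card_union_of_disjoint (disjoint_of_subset_right hO disjoint_sdiff)]
    exact card_le_card (union_subset hS.subset (hO.trans sdiff_subset))
  rw [hS.card_eq] at hU hm
  omega

theorem three_mul_le (hout : (L \ R).Nonempty) : 3 * (r + 1) ≤ #P + #L := by
  obtain ⟨t, ht⟩ := hout
  have hcount := fun (F : Finset α) => hS.four_mul_add_card_add_card_le hP hr (O := {t}) (F := F)
    (singleton_subset_iff.2 ht)
  have hU := card_biUnion_add_card_doublePoints hS.isTwoPacking fun X hX => hr X (hS.subset hX)
  rw [hS.card_eq, card_singleton] at *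
  -- If every point of the packing is double, then `d = 2r` and `t` has `r - 2` points off the
  -- packing; otherwise `2d < 4r`, which together with `d ≤ 6` gives `d ≤ r + 2`.
  by_cases hUD : R.biUnion id ⊆ doublePoints R
  · have hDU : doublePoints R = R.biUnion id := subset_antisymm doublePoints_subset hUD
    have ht4 := hS.card_inter_biUnion_add_card_inter_doublePoints_le ht
    have hfresh := card_sdiff_add_card_inter t (R.biUnion id)
    have := hcount _ (sdiff_subset.trans (hP t (mem_sdiff.1 ht).1)) sdiff_disjoint
    rw [hDU] at ht4 this hU
    rw [hr t (mem_sdiff.1 ht).1] at hfresh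
    omega
  · obtain ⟨w, hwU, hwD⟩ := not_subset.1 hUD
    obtain ⟨X, hX, hwX⟩ := mem_biUnion.1 hwU
    have hsum := two_mul_card_doublePoints_add_card_le hS.isTwoPacking
      fun X hX => hr X (hS.subset hX)
    have hpos : 0 < #{X ∈ R | ¬X ⊆ doublePoints R} :=
      card_pos.2 ⟨X, mem_filter.2 ⟨hX, fun h => hwD (h hwX)⟩⟩
    have := hcount _ (empty_subset P) (disjoint_empty_left _)
    have := hS.card_doublePoints_le
    rw [hS.card_eq, card_empty] at *
    omega

theorem four_mul_le_of_full {O : Finset (Finset α)} (hO : O ⊆ L \ R) (hO3 : 3 ≤ #O)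
    (hOD : ∀ t ∈ O, #(t ∩ doublePoints R) ≤ 1) {f : Finset α} (hf : f ∈ L \ R)
    (hfD : 2 ≤ #(f ∩ doublePoints R)) {w : α} (hwU : w ∈ R.biUnion id)
    (hwD : w ∉ doublePoints R) : 4 * (r + 1) ≤ #P + #L := by
  -- `f` has `r - 2` points off the packing, and `w` gives `2d < 4r`, hence `d ≤ r + 2`.
  have hfO : f ∉ O := fun h => by have := hOD f h; omega
  have hO4 := card_insert_of_notMem hfO
  replace hO : insert f O ⊆ L \ R := insert_subset hf hO
  have hf4 := hS.card_inter_biUnion_add_card_inter_doublePoints_le hf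
  have hfresh := card_sdiff_add_card_inter f (R.biUnion id)
  rw [hr f (mem_sdiff.1 hf).1] at hfresh
  have hcount := hS.four_mul_add_card_add_card_le hP hr hO
    (sdiff_subset.trans (hP f (mem_sdiff.1 hf).1)) sdiff_disjoint
  obtain ⟨X, hX, hwX⟩ := mem_biUnion.1 hwU
  have hsum := two_mul_card_doublePoints_add_card_le hS.isTwoPacking
    fun X hX => hr X (hS.subset hX)
  have hpos : 0 < #{X ∈ R | ¬X ⊆ doublePoints R} :=
    card_pos.2 ⟨X, mem_filter.2 ⟨hX, fun h => hwD (h hwX)⟩⟩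
  have := hS.card_doublePoints_le
  rw [hS.card_eq] at hsum
  omega

theorem four_mul_le_of_forall_not_subset {O : Finset (Finset α)} (hO : O ⊆ L \ R)
    (hO4 : 4 ≤ #O) {a z : Finset α} (ha : a ∈ L \ R) (hz : z ∈ L \ R) (haz : a ≠ z)
    (haD : 1 ≤ #(a ∩ doublePoints R)) (hzD : 1 ≤ #(z ∩ doublePoints R)) {w : α} (hwa : w ∈ a)
    (hwz : w ∈ z) (hwU : w ∈ R.biUnion id) (hall : ∀ X ∈ R, ¬X ⊆ doublePoints R) :
    4 * (r + 1) ≤ #P + #L := by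
  -- `a` and `z` have `r - 3` points each off the packing, and these are disjoint since `a` and `z`
  -- meet at `w`; a non-double point on every packing line gives `d ≤ 2r - 2`.
  have hdisj : Disjoint (a \ R.biUnion id) (z \ R.biUnion id) := by
    rw [disjoint_left]
    intro p hpa hpz
    rw [mem_sdiff] at hpa hpz
    have := eq_of_mem_inter_of_pairwise hS.linear (mem_sdiff.1 ha).1 (mem_sdiff.1 hz).1 haz
      (mem_inter.2 ⟨hpa.1, hpz.1⟩) (mem_inter.2 ⟨hwa, hwz⟩)
    exact hpa.2 (this ▸ hwU)
  have hcount := hS.four_mul_add_card_add_card_le hP hr hO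
    (union_subset (sdiff_subset.trans (hP a (mem_sdiff.1 ha).1))
      (sdiff_subset.trans (hP z (mem_sdiff.1 hz).1)))
    (disjoint_union_left.2 ⟨sdiff_disjoint, sdiff_disjoint⟩)
  rw [card_union_of_disjoint hdisj] at hcount
  have ha4 := hS.card_inter_biUnion_add_card_inter_doublePoints_le ha
  have hz4 := hS.card_inter_biUnion_add_card_inter_doublePoints_le hz
  have hfa := card_sdiff_add_card_inter a (R.biUnion id)
  have hfz := card_sdiff_add_card_inter z (R.biUnion id)
  rw [hr a (mem_sdiff.1 ha).1] at hfa
  rw [hr z (mem_sdiff.1 hz).1] at hfz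
  have hsum := two_mul_card_doublePoints_add_card_le hS.isTwoPacking
    fun X hX => hr X (hS.subset hX)
  rw [filter_true_of_mem hall, hS.card_eq] at hsum
  omega

theorem four_mul_le_of_cycle {X Y Z W : Finset α} (hR : R = {X, Y, Z, W}) {a b z y : Finset α}
    (ha : a ∈ L \ R) (hb : b ∈ L \ R) (hz : z ∈ L \ R) (hy : y ∈ L \ R)
    (has : IsSingle X Y Z W a) (hbs : IsSingle Z W X Y b) (hzs : IsSingle X Z Y W z)
    (hys : IsSingle Y W X Z y) : 4 * (r + 1) ≤ #P + #L := by
  have hm : X ∈ R ∧ Y ∈ R ∧ Z ∈ R ∧ W ∈ R := by simp [hR]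
  obtain ⟨hXY, hXZ, -, -, -, -⟩ := hS.pairwise_ne_of_eq hR
  have hR₁ : R = {Z, X, W, Y} := hR.trans (by ext; simp; tauto)
  have hR₂ : R = {Z, W, X, Y} := hR.trans (by ext; simp; tauto)
  have hR₃ : R = {Y, X, W, Z} := hR.trans (by ext; simp; tauto)
  have hR₄ : R = {W, Z, Y, X} := hR.trans (by ext; simp; tauto)
  obtain ⟨w₁, hw₁⟩ := hS.inter_inter_nonempty_of_isSingle hR ha hz has hzs
  obtain ⟨w₂, hw₂⟩ := hS.inter_inter_nonempty_of_isSingle hR₁ hz hb hzs.swap_left.swap_right hbs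
  obtain ⟨w₃, hw₃⟩ := hS.inter_inter_nonempty_of_isSingle hR₃ ha hy has.swap_left.swap_right hys
  obtain ⟨w₄, hw₄⟩ := hS.inter_inter_nonempty_of_isSingle hR₄ hb hy hbs.swap_left.swap_right
    hys.swap_left.swap_right
  simp only [mem_inter] at hw₁ hw₂ hw₃ hw₄
  have hab : a ≠ b := fun h => has.2 (h ▸ hbs.1)
  have haz : a ≠ z := hS.ne_of_through_of_through hR ha has.1 hzs.1
  have hay : a ≠ y := hS.ne_of_through_of_through hR₃ ha has.swap_left.1 hys.1
  have hO : #{a, b, z, y} = 4 := by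
    rw [card_insert_of_notMem (by simp [hab, haz, hay]),
      card_eq_three.2 ⟨b, z, y, hS.ne_of_through_of_through hR₂ hb hbs.1 hzs.swap_left.1,
        hS.ne_of_through_of_through hR₄ hb hbs.swap_left.1 hys.swap_left.1,
        fun h => hzs.2 (h ▸ hys.1), rfl⟩]
  refine hS.four_mul_le_of_forall_not_subset hP hr (O := {a, b, z, y})
    (by simp [insert_subset_iff, ha, hb, hz, hy]) hO.ge ha hz haz
    (one_le_card_inter_doublePoints hm.1 hm.2.1 hXY has.1)
    (one_le_card_inter_doublePoints hm.1 hm.2.2.1 hXZ hzs.1)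
    hw₁.1.1 hw₁.1.2 (mem_biUnion.2 ⟨W, hm.2.2.2, hw₁.2⟩) fun V hV h => ?_
  rw [hR] at hV
  simp only [mem_insert, mem_singleton] at hV
  rcases hV with rfl | rfl | rfl | rfl
  · exact hS.not_mem_doublePoints_of_isSingle hR₄ hb hbs.swap_left.swap_right hw₄.1.1 hw₄.2
      (h hw₄.2)
  · exact hS.not_mem_doublePoints_of_isSingle hR₂ hb hbs hw₂.1.2 hw₂.2 (h hw₂.2)
  · exact hS.not_mem_doublePoints_of_isSingle hR₃ ha has.swap_left.swap_right hw₃.1.1 hw₃.2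
      (h hw₃.2)
  · exact hS.not_mem_doublePoints_of_isSingle hR ha has hw₁.1.1 hw₁.2 (h hw₁.2)

end Counting

section Transversals

variable {P : Finset α} (hP : ∀ ℓ ∈ L, ℓ ⊆ P)
include hP

variable {X Y Z W : Finset α} (hR : R = {X, Y, Z, W})
include hR

theorem isTransversal_of_triangle {w : α} (hw : w ∈ W)
    (hwt : ∀ t ∈ L \ R, IsSingle X Y Z W t ∨ IsSingle X Z Y W t ∨ IsSingle Y Z X W t → w ∈ t)
    (hXY : (X ∩ Y).Nonempty) (hXZ : (X ∩ Z).Nonempty) (hXW : ¬∃ t ∈ L \ R, IsSingle X W Y Z t)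
    (hYW : ¬∃ t ∈ L \ R, IsSingle Y W X Z t) (hZW : ¬∃ t ∈ L \ R, IsSingle Z W X Y t)
    {Q : Finset α} (hQP : Q ⊆ P)
    (hQ : ∀ t ∈ L \ R, (X ∩ W ∩ t).Nonempty → (Y ∩ Z ∩ t).Nonempty → (Q ∩ t).Nonempty) :
    IsTransversal P L (insert w (X ∩ Y ∪ X ∩ Z ∪ Q)) := by
  have hm : X ∈ R ∧ W ∈ R := by simp [hR]
  set T := insert w (X ∩ Y ∪ X ∩ Z ∪ Q)
  have hwT : w ∈ T := mem_insert_self _ _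
  have h₁ : X ∩ Y ⊆ T := fun _ h => by simp [T, h]
  have h₂ : X ∩ Z ⊆ T := fun _ h => by simp [T, h]
  have h₃ : Q ⊆ T := fun _ h => by simp [T, h]
  obtain ⟨p, hp⟩ := hXY
  obtain ⟨q, hq⟩ := hXZ
  refine ⟨insert_subset (hP W (hS.subset hm.2) hw) (union_subset (union_subset
    (inter_subset_left.trans (hP X (hS.subset hm.1)))
    (inter_subset_left.trans (hP X (hS.subset hm.1)))) hQP), fun ℓ hℓ => ?_⟩
  by_cases hℓR : ℓ ∈ R
  · rw [hR] at hℓR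
    simp only [mem_insert, mem_singleton] at hℓR
    rcases hℓR with rfl | rfl | rfl | rfl
    · exact ⟨p, mem_inter.2 ⟨h₁ hp, (mem_inter.1 hp).1⟩⟩
    · exact ⟨p, mem_inter.2 ⟨h₁ hp, (mem_inter.1 hp).2⟩⟩
    · exact ⟨q, mem_inter.2 ⟨h₂ hq, (mem_inter.1 hq).2⟩⟩
    · exact ⟨w, mem_inter.2 ⟨hwT, hw⟩⟩
  have ht : ℓ ∈ L \ R := mem_sdiff.2 ⟨hℓ, hℓR⟩
  rcases hS.through_cases hR ht with h | h | h | h | h | h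
  · exact h.mono (inter_subset_inter_right h₁)
  · by_contra hne
    exact hZW ⟨ℓ, ht, h, fun h' => hne (h'.mono (inter_subset_inter_right h₁))⟩
  · exact h.mono (inter_subset_inter_right h₂)
  · by_contra hne
    exact hYW ⟨ℓ, ht, h, fun h' => hne (h'.mono (inter_subset_inter_right h₂))⟩
  · by_cases h' : (Y ∩ Z ∩ ℓ).Nonempty
    · exact (hQ ℓ ht h h').mono (inter_subset_inter_right h₃)
    · exact absurd ⟨ℓ, ht, h, h'⟩ hXW
  · by_cases h' : (X ∩ W ∩ ℓ).Nonempty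
    · exact (hQ ℓ ht h' h).mono (inter_subset_inter_right h₃)
    · exact ⟨w, mem_inter.2 ⟨hwT, hwt ℓ ht (Or.inr (Or.inr ⟨h, h'⟩))⟩⟩

theorem isTransversal_of_matching (hXY : (X ∩ Y).Nonempty) (hZW : (Z ∩ W).Nonempty)
    (hXZ : ¬∃ t ∈ L \ R, IsSingle X Z Y W t) (hYW : ¬∃ t ∈ L \ R, IsSingle Y W X Z t)
    (hXW : ¬∃ t ∈ L \ R, IsSingle X W Y Z t) (hYZ : ¬∃ t ∈ L \ R, IsSingle Y Z X W t)
    {Q : Finset α} (hQP : Q ⊆ P) (hQ : ∀ t ∈ L \ R,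
      (X ∩ Z ∩ t).Nonempty ∧ (Y ∩ W ∩ t).Nonempty ∨ (X ∩ W ∩ t).Nonempty ∧ (Y ∩ Z ∩ t).Nonempty →
        (Q ∩ t).Nonempty) :
    IsTransversal P L (X ∩ Y ∪ Z ∩ W ∪ Q) := by
  have hm : X ∈ R ∧ Z ∈ R := by simp [hR]
  set T := X ∩ Y ∪ Z ∩ W ∪ Q
  have h₁ : X ∩ Y ⊆ T := fun _ h => by simp [T, h]
  have h₂ : Z ∩ W ⊆ T := fun _ h => by simp [T, h]
  have h₃ : Q ⊆ T := fun _ h => by simp [T, h]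
  obtain ⟨p, hp⟩ := hXY
  obtain ⟨q, hq⟩ := hZW
  refine ⟨union_subset (union_subset (inter_subset_left.trans (hP X (hS.subset hm.1)))
    (inter_subset_left.trans (hP Z (hS.subset hm.2)))) hQP, fun ℓ hℓ => ?_⟩
  by_cases hℓR : ℓ ∈ R
  · rw [hR] at hℓR
    simp only [mem_insert, mem_singleton] at hℓR
    rcases hℓR with rfl | rfl | rfl | rfl
    · exact ⟨p, mem_inter.2 ⟨h₁ hp, (mem_inter.1 hp).1⟩⟩
    · exact ⟨p, mem_inter.2 ⟨h₁ hp, (mem_inter.1 hp).2⟩⟩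
    · exact ⟨q, mem_inter.2 ⟨h₂ hq, (mem_inter.1 hq).1⟩⟩
    · exact ⟨q, mem_inter.2 ⟨h₂ hq, (mem_inter.1 hq).2⟩⟩
  have ht : ℓ ∈ L \ R := mem_sdiff.2 ⟨hℓ, hℓR⟩
  have hQℓ := fun h => (hQ ℓ ht h).mono (inter_subset_inter_right h₃)
  rcases hS.through_cases hR ht with h | h | h | h | h | h
  · exact h.mono (inter_subset_inter_right h₁)
  · exact h.mono (inter_subset_inter_right h₂)
  · by_cases h' : (Y ∩ W ∩ ℓ).Nonempty
    · exact hQℓ (Or.inl ⟨h, h'⟩)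
    · exact absurd ⟨ℓ, ht, h, h'⟩ hXZ
  · by_cases h' : (X ∩ Z ∩ ℓ).Nonempty
    · exact hQℓ (Or.inl ⟨h', h⟩)
    · exact absurd ⟨ℓ, ht, h, h'⟩ hYW
  · by_cases h' : (Y ∩ Z ∩ ℓ).Nonempty
    · exact hQℓ (Or.inr ⟨h, h'⟩)
    · exact absurd ⟨ℓ, ht, h, h'⟩ hXW
  · by_cases h' : (X ∩ W ∩ ℓ).Nonempty
    · exact hQℓ (Or.inr ⟨h', h⟩)
    · exact absurd ⟨ℓ, ht, h, h'⟩ hYZ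

theorem isTransversal_of_path {w₁ w₂ : α} (hw₁ : w₁ ∈ W) (hw₂ : w₂ ∈ Y)
    (hw₁t : ∀ t ∈ L \ R, IsSingle X Y Z W t ∨ IsSingle X Z Y W t ∨ IsSingle Y Z X W t → w₁ ∈ t)
    (hw₂t : ∀ t ∈ L \ R, IsSingle Z W X Y t ∨ IsSingle X W Y Z t → w₂ ∈ t)
    (hXZ : (X ∩ Z).Nonempty) {Q : Finset α} (hQP : Q ⊆ P) (hQ : ∀ t ∈ L \ R,
      IsSingle Y W X Z t ∨ (X ∩ Y ∩ t).Nonempty ∧ (Z ∩ W ∩ t).Nonempty ∨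
        (X ∩ W ∩ t).Nonempty ∧ (Y ∩ Z ∩ t).Nonempty → (Q ∩ t).Nonempty) :
    IsTransversal P L (insert w₁ (insert w₂ (X ∩ Z ∪ Q))) := by
  have hm : X ∈ R ∧ Y ∈ R ∧ W ∈ R := by simp [hR]
  set T := insert w₁ (insert w₂ (X ∩ Z ∪ Q))
  have h₁ : w₁ ∈ T := by simp [T]
  have h₂ : w₂ ∈ T := by simp [T]
  have h₃ : X ∩ Z ⊆ T := fun _ h => by simp [T, h]
  have h₄ : Q ⊆ T := fun _ h => by simp [T, h]
  obtain ⟨p, hp⟩ := hXZ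
  refine ⟨insert_subset (hP W (hS.subset hm.2.2) hw₁) (insert_subset (hP Y (hS.subset hm.2.1) hw₂)
    (union_subset (inter_subset_left.trans (hP X (hS.subset hm.1))) hQP)), fun ℓ hℓ => ?_⟩
  by_cases hℓR : ℓ ∈ R
  · rw [hR] at hℓR
    simp only [mem_insert, mem_singleton] at hℓR
    rcases hℓR with rfl | rfl | rfl | rfl
    · exact ⟨p, mem_inter.2 ⟨h₃ hp, (mem_inter.1 hp).1⟩⟩
    · exact ⟨w₂, mem_inter.2 ⟨h₂, hw₂⟩⟩
    · exact ⟨p, mem_inter.2 ⟨h₃ hp, (mem_inter.1 hp).2⟩⟩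
    · exact ⟨w₁, mem_inter.2 ⟨h₁, hw₁⟩⟩
  have ht : ℓ ∈ L \ R := mem_sdiff.2 ⟨hℓ, hℓR⟩
  have hQℓ := fun h => (hQ ℓ ht h).mono (inter_subset_inter_right h₄)
  have hw₁ℓ := fun h => (⟨w₁, mem_inter.2 ⟨h₁, hw₁t ℓ ht h⟩⟩ : (T ∩ ℓ).Nonempty)
  have hw₂ℓ := fun h => (⟨w₂, mem_inter.2 ⟨h₂, hw₂t ℓ ht h⟩⟩ : (T ∩ ℓ).Nonempty)
  rcases hS.through_cases hR ht with h | h | h | h | h | h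
  · by_cases h' : (Z ∩ W ∩ ℓ).Nonempty
    · exact hQℓ (Or.inr (Or.inl ⟨h, h'⟩))
    · exact hw₁ℓ (Or.inl ⟨h, h'⟩)
  · by_cases h' : (X ∩ Y ∩ ℓ).Nonempty
    · exact hQℓ (Or.inr (Or.inl ⟨h', h⟩))
    · exact hw₂ℓ (Or.inl ⟨h, h'⟩)
  · exact h.mono (inter_subset_inter_right h₃)
  · by_cases h' : (X ∩ Z ∩ ℓ).Nonempty
    · exact h'.mono (inter_subset_inter_right h₃)
    · exact hQℓ (Or.inl ⟨h, h'⟩)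
  · by_cases h' : (Y ∩ Z ∩ ℓ).Nonempty
    · exact hQℓ (Or.inr (Or.inr ⟨h, h'⟩))
    · exact hw₂ℓ (Or.inr ⟨h, h'⟩)
  · by_cases h' : (X ∩ W ∩ ℓ).Nonempty
    · exact hQℓ (Or.inr (Or.inr ⟨h', h⟩))
    · exact hw₁ℓ (Or.inr (Or.inr ⟨h, h'⟩))

end Transversals

section

variable {P : Finset α} {r : ℕ} (hP : ∀ ℓ ∈ L, ℓ ⊆ P) (hr : ∀ ℓ ∈ L, #ℓ = r)
include hP hr

variable {X Y Z W : Finset α}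

theorem mul_tau_le_of_triangle (hR : R = {X, Y, Z, W})
    (hXY : ∃ t ∈ L \ R, IsSingle X Y Z W t) (hXZ : ∃ t ∈ L \ R, IsSingle X Z Y W t)
    (hYZ : ∃ t ∈ L \ R, IsSingle Y Z X W t) (hXW : ¬∃ t ∈ L \ R, IsSingle X W Y Z t)
    (hYW : ¬∃ t ∈ L \ R, IsSingle Y W X Z t) (hZW : ¬∃ t ∈ L \ R, IsSingle Z W X Y t) :
    (r + 1) * tau P L ≤ #P + #L := by
  have hm : X ∈ R ∧ Y ∈ R ∧ Z ∈ R ∧ W ∈ R := by simp [hR]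
  obtain ⟨hXY', hXZ', -, hYZ', -, -⟩ := hS.pairwise_ne_of_eq hR
  obtain ⟨x₁, hx₁, hs₁⟩ := hXY
  obtain ⟨x₂, hx₂, hs₂⟩ := hXZ
  obtain ⟨x₃, hx₃, hs₃⟩ := hYZ
  obtain ⟨w, hwW, hwx₁, -, hwt⟩ := hS.exists_mem_forall_isSingle hR hx₁ hx₂ hs₁ hs₂
  -- `w` lies on every single line, so only full lines through `X ∩ W` and `Y ∩ Z` can avoid
  -- `{w} ∪ (X ∩ Y) ∪ (X ∩ Z)`.
  have hT := fun Q => hS.isTransversal_of_triangle hP hR (Q := Q) hwW hwt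
    (hs₁.1.mono inter_subset_left) (hs₂.1.mono inter_subset_left) hXW hYW hZW
  have hcard : ∀ Q : Finset α, #(insert w (X ∩ Y ∪ X ∩ Z ∪ Q)) ≤ 3 + #Q := fun Q => by
    have := card_insert_le w (X ∩ Y ∪ X ∩ Z ∪ Q)
    have := card_union_le (X ∩ Y ∪ X ∩ Z) Q
    have := card_union_le (X ∩ Y) (X ∩ Z)
    have := hS.linear (hS.subset hm.1) (hS.subset hm.2.1) hXY'
    have := hS.linear (hS.subset hm.1) (hS.subset hm.2.2.1) hXZ'
    omega
  by_cases hf : ∃ f ∈ L \ R, (X ∩ W ∩ f).Nonempty ∧ (Y ∩ Z ∩ f).Nonempty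
  · obtain ⟨f, hf, hf₁, hf₂⟩ := hf
    refine mul_tau_le_of_isTransversal (k := 4) (hT _ (inter_subset_left.trans
      (hP Y (hS.subset hm.2.1))) fun _ _ _ h => h) ((hcard _).trans (Nat.add_le_add_left
      (hS.linear (hS.subset hm.2.1) (hS.subset hm.2.2.1) hYZ') 3)) ?_
    have hO : #{x₁, x₂, x₃} = 3 := card_eq_three.2 ⟨x₁, x₂, x₃,
      hS.ne_of_through_of_through hR hx₁ hs₁.1 hs₂.1,
      hS.ne_of_through_of_through (quad_swap₁₂ hR) hx₁ hs₁.swap_left.1 hs₃.1,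
      hS.ne_of_through_of_through (quad_swap₁₂ (quad_swap₂₃ hR)) hx₂ hs₂.swap_left.1
        hs₃.swap_left.1, rfl⟩
    refine hS.four_mul_le_of_full hP hr (O := {x₁, x₂, x₃})
      (by simp [insert_subset_iff, hx₁, hx₂, hx₃]) hO.ge ?_ hf
      (hS.two_le_card_inter_doublePoints (quad_swap₂₃ (quad_swap₃₄ hR)) hf₁ hf₂)
      (mem_biUnion.2 ⟨W, hm.2.2.2, hwW⟩) (hS.not_mem_doublePoints_of_isSingle hR hx₁ hs₁ hwx₁ hwW)
    simp only [mem_insert, mem_singleton]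
    rintro t (rfl | rfl | rfl)
    · exact hS.card_inter_doublePoints_le_one_of_isSingle hR hx₁ hs₁
    · exact hS.card_inter_doublePoints_le_one_of_isSingle (quad_swap₂₃ hR) hx₂ hs₂
    · exact hS.card_inter_doublePoints_le_one_of_isSingle (quad_swap₂₃ (quad_swap₁₂ hR)) hx₃ hs₃
  · exact mul_tau_le_of_isTransversal (hT _ (empty_subset P)
      fun f hf' h₁ h₂ => absurd ⟨f, hf', h₁, h₂⟩ hf) (by simpa using hcard ∅)
      (hS.three_mul_le hP hr ⟨x₁, hx₁⟩)

theorem mul_tau_le_of_matching (hR : R = {X, Y, Z, W})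
    (hXY : ∃ t ∈ L \ R, IsSingle X Y Z W t) (hZW : ∃ t ∈ L \ R, IsSingle Z W X Y t)
    (hXZ : ¬∃ t ∈ L \ R, IsSingle X Z Y W t) (hYW : ¬∃ t ∈ L \ R, IsSingle Y W X Z t)
    (hXW : ¬∃ t ∈ L \ R, IsSingle X W Y Z t) (hYZ : ¬∃ t ∈ L \ R, IsSingle Y Z X W t) :
    (r + 1) * tau P L ≤ #P + #L := by
  obtain ⟨hXY', -, -, -, -, hZW'⟩ := hS.pairwise_ne_of_eq hR
  have hm : X ∈ R ∧ Y ∈ R ∧ Z ∈ R ∧ W ∈ R := by simp [hR]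
  obtain ⟨a, ha, has⟩ := hXY
  obtain ⟨b, hb, hbs⟩ := hZW
  obtain ⟨Q, hQsub, hQ, hQt⟩ := hS.exists_card_le_one_forall_full hR ha has
  refine mul_tau_le_of_isTransversal (hS.isTransversal_of_matching hP hR
    (has.1.mono inter_subset_left) (hbs.1.mono inter_subset_left) hXZ hYW hXW hYZ
    (hQsub.trans (union_subset (hP X (hS.subset hm.1)) (hP a (mem_sdiff.1 ha).1))) hQt) ?_
    (hS.three_mul_le hP hr ⟨a, ha⟩)
  have := card_union_le (X ∩ Y ∪ Z ∩ W) Q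
  have := card_union_le (X ∩ Y) (Z ∩ W)
  have := hS.linear (hS.subset hm.1) (hS.subset hm.2.1) hXY'
  have := hS.linear (hS.subset hm.2.2.1) (hS.subset hm.2.2.2) hZW'
  omega

theorem four_mul_le_of_path_of_full (hR : R = {X, Y, Z, W}) {a b z : Finset α} (ha : a ∈ L \ R)
    (hb : b ∈ L \ R) (hz : z ∈ L \ R) (has : IsSingle X Y Z W a) (hbs : IsSingle Z W X Y b)
    (hzs : IsSingle X Z Y W z) (hfull : ∃ f ∈ L \ R,
      (X ∩ Y ∩ f).Nonempty ∧ (Z ∩ W ∩ f).Nonempty ∨ (X ∩ Z ∩ f).Nonempty ∧ (Y ∩ W ∩ f).Nonempty ∨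
        (X ∩ W ∩ f).Nonempty ∧ (Y ∩ Z ∩ f).Nonempty) : 4 * (r + 1) ≤ #P + #L := by
  obtain ⟨f, hf, hfc⟩ := hfull
  obtain ⟨w, hw⟩ := hS.inter_inter_nonempty_of_isSingle hR ha hz has hzs
  simp only [mem_inter] at hw
  have hR₁ : R = {Z, W, X, Y} := hR.trans (by ext; simp; tauto)
  refine hS.four_mul_le_of_full hP hr (O := {a, b, z}) (by simp [insert_subset_iff, ha, hb, hz])
    (card_eq_three.2 ⟨a, b, z, fun h => has.2 (h ▸ hbs.1),
      hS.ne_of_through_of_through hR ha has.1 hzs.1,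
      hS.ne_of_through_of_through hR₁ hb hbs.1 hzs.swap_left.1, rfl⟩).ge ?_ hf ?_
    (mem_biUnion.2 ⟨W, by simp [hR], hw.2⟩)
    (hS.not_mem_doublePoints_of_isSingle hR ha has hw.1.1 hw.2)
  · simp only [mem_insert, mem_singleton]
    rintro t (rfl | rfl | rfl)
    · exact hS.card_inter_doublePoints_le_one_of_isSingle hR ha has
    · exact hS.card_inter_doublePoints_le_one_of_isSingle hR₁ hb hbs
    · exact hS.card_inter_doublePoints_le_one_of_isSingle (quad_swap₂₃ hR) hz hzs
  · rcases hfc with ⟨h₁, h₂⟩ | ⟨h₁, h₂⟩ | ⟨h₁, h₂⟩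
    · exact hS.two_le_card_inter_doublePoints hR h₁ h₂
    · exact hS.two_le_card_inter_doublePoints (quad_swap₂₃ hR) h₁ h₂
    · exact hS.two_le_card_inter_doublePoints (quad_swap₂₃ (quad_swap₃₄ hR)) h₁ h₂

theorem mul_tau_le_of_path (hR : R = {X, Y, Z, W})
    (hXY : ∃ t ∈ L \ R, IsSingle X Y Z W t) (hZW : ∃ t ∈ L \ R, IsSingle Z W X Y t)
    (hXZ : ∃ t ∈ L \ R, IsSingle X Z Y W t) : (r + 1) * tau P L ≤ #P + #L := by
  have hm : X ∈ R ∧ Y ∈ R ∧ Z ∈ R ∧ W ∈ R := by simp [hR]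
  obtain ⟨hXY', hXZ', -, -, hYW', -⟩ := hS.pairwise_ne_of_eq hR
  obtain ⟨a, ha, has⟩ := hXY
  obtain ⟨b, hb, hbs⟩ := hZW
  obtain ⟨z, hz, hzs⟩ := hXZ
  -- `w₁ ∈ W` lies on the `XY`, `XZ` and `YZ` singles and `w₂ ∈ Y` on the `ZW` and `XW` singles;
  -- the `YW` singles and the full lines through `X ∩ Y` or `X ∩ W` are left to a set `Q`.
  obtain ⟨w₁, hw₁W, -, -, hw₁t⟩ := hS.exists_mem_forall_isSingle hR ha hz has hzs
  obtain ⟨w₂, hw₂Y, -, -, hw₂t⟩ := hS.exists_mem_forall_isSingle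
    (hR.trans (by ext; simp; tauto) : R = {Z, X, W, Y}) hz hb hzs.swap_left.swap_right hbs
  have hT := fun (Q : Finset α) => hS.isTransversal_of_path hP hR (Q := Q) hw₁W hw₂Y hw₁t
    (fun t ht h => hw₂t t ht (h.elim (fun h => Or.inr (Or.inl h))
      fun h => Or.inr (Or.inr h.swap_right))) (hzs.1.mono inter_subset_left)
  have hcard : ∀ Q : Finset α, #(insert w₁ (insert w₂ (X ∩ Z ∪ Q))) ≤ 3 + #Q := fun Q => by
    have := card_insert_le w₁ (insert w₂ (X ∩ Z ∪ Q))
    have := card_insert_le w₂ (X ∩ Z ∪ Q)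
    have := card_union_le (X ∩ Z) Q
    have := hS.linear (hS.subset hm.1) (hS.subset hm.2.2.1) hXZ'
    omega
  by_cases hfull : ∃ f ∈ L \ R, (X ∩ Y ∩ f).Nonempty ∧ (Z ∩ W ∩ f).Nonempty ∨
      (X ∩ Z ∩ f).Nonempty ∧ (Y ∩ W ∩ f).Nonempty ∨ (X ∩ W ∩ f).Nonempty ∧ (Y ∩ Z ∩ f).Nonempty
  · obtain ⟨Q, hQsub, hQ, hQt⟩ := hS.exists_card_le_one_forall_inter_nonempty_of_isSingle hR hz hzs
    have hQP : Q ⊆ P := hQsub.trans (union_subset (union_subset (hP X (hS.subset hm.1))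
      (hP Y (hS.subset hm.2.1))) (hP z (mem_sdiff.1 hz).1))
    exact mul_tau_le_of_isTransversal (k := 4) (hT _ hQP hQt) ((hcard Q).trans (by omega))
      (hS.four_mul_le_of_path_of_full hP hr hR ha hb hz has hbs hzs hfull)
  have hno : ∀ t ∈ L \ R, ¬((X ∩ Y ∩ t).Nonempty ∧ (Z ∩ W ∩ t).Nonempty ∨
      (X ∩ W ∩ t).Nonempty ∧ (Y ∩ Z ∩ t).Nonempty) := fun t ht h =>
    hfull ⟨t, ht, h.imp id Or.inr⟩
  by_cases hy : ∃ y ∈ L \ R, IsSingle Y W X Z y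
  · obtain ⟨y, hy, hys⟩ := hy
    exact mul_tau_le_of_isTransversal (k := 4) (hT _ (inter_subset_left.trans
      (hP Y (hS.subset hm.2.1))) fun t ht h => h.elim (·.1) fun h => absurd h (hno t ht))
      ((hcard _).trans (Nat.add_le_add_left (hS.linear (hS.subset hm.2.1) (hS.subset hm.2.2.2)
        hYW') 3)) (hS.four_mul_le_of_cycle hP hr hR ha hb hz hy has hbs hzs hys)
  · refine mul_tau_le_of_isTransversal (hT _ (empty_subset P) fun t ht h => ?_)
      (by simpa using hcard ∅) (hS.three_mul_le hP hr ⟨a, ha⟩)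
    exact h.elim (fun h => absurd ⟨t, ht, h⟩ hy) fun h => absurd h (hno t ht)

theorem mul_tau_le_of_opposite_singles (hR : R = {X, Y, Z, W})
    (hXY : ∃ t ∈ L \ R, IsSingle X Y Z W t) (hZW : ∃ t ∈ L \ R, IsSingle Z W X Y t) :
    (r + 1) * tau P L ≤ #P + #L := by
  by_cases hXZ : ∃ t ∈ L \ R, IsSingle X Z Y W t
  · exact hS.mul_tau_le_of_path hP hr hR hXY hZW hXZ
  by_cases hXW : ∃ t ∈ L \ R, IsSingle X W Y Z t
  · exact hS.mul_tau_le_of_path hP hr (quad_swap₃₄ hR)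
      (by simpa only [isSingle_comm_right] using hXY)
      (by simpa only [isSingle_comm_left] using hZW) hXW
  by_cases hYZ : ∃ t ∈ L \ R, IsSingle Y Z X W t
  · exact hS.mul_tau_le_of_path hP hr (quad_swap₁₂ hR)
      (by simpa only [isSingle_comm_left] using hXY)
      (by simpa only [isSingle_comm_right] using hZW) hYZ
  by_cases hYW : ∃ t ∈ L \ R, IsSingle Y W X Z t
  · exact hS.mul_tau_le_of_path hP hr (quad_swap₃₄ (quad_swap₁₂ hR))
      (by simpa only [isSingle_comm_left, isSingle_comm_right] using hXY)
      (by simpa only [isSingle_comm_left, isSingle_comm_right] using hZW) hYW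
  exact hS.mul_tau_le_of_matching hP hr hR hXY hZW hXZ hYW hXW hYZ

theorem mul_tau_le_of_star (hne : ∀ ℓ ∈ L, ℓ.Nonempty) (hout : (L \ R).Nonempty)
    (hR : R = {X, Y, Z, W}) (hYZ : ¬∃ t ∈ L \ R, IsSingle Y Z X W t)
    (hYW : ¬∃ t ∈ L \ R, IsSingle Y W X Z t) (hZW : ¬∃ t ∈ L \ R, IsSingle Z W X Y t) :
    (r + 1) * tau P L ≤ #P + #L := by
  have := tau_le_card_sub_one_of_forall_through hS.linear hne hP hS.subset (by simp [hR] : X ∈ R)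
    hout (hS.forall_through_of_not_isSingle hR hYZ hYW hZW)
  rw [hS.card_eq] at this
  exact (Nat.mul_le_mul_left _ this).trans (by rw [mul_comm]; exact hS.three_mul_le hP hr hout)

theorem mul_tau_le_of_not_opposite_singles (hne : ∀ ℓ ∈ L, ℓ.Nonempty) (hout : (L \ R).Nonempty)
    {A B C D : Finset α} (hR : R = {A, B, C, D})
    (h₁ : ¬((∃ t ∈ L \ R, IsSingle A B C D t) ∧ ∃ t ∈ L \ R, IsSingle C D A B t))
    (h₂ : ¬((∃ t ∈ L \ R, IsSingle A C B D t) ∧ ∃ t ∈ L \ R, IsSingle B D A C t))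
    (h₃ : ¬((∃ t ∈ L \ R, IsSingle A D B C t) ∧ ∃ t ∈ L \ R, IsSingle B C A D t)) :
    (r + 1) * tau P L ≤ #P + #L := by
  rcases star_or_triangle h₁ h₂ h₃ with h | h | h | h | h | h | h | h
  · exact hS.mul_tau_le_of_star hP hr hne hout hR h.1 h.2.1 h.2.2
  · exact hS.mul_tau_le_of_star hP hr hne hout (quad_swap₁₂ hR) h.1 h.2.1
      (by simpa only [isSingle_comm_right] using h.2.2)
  · exact hS.mul_tau_le_of_star hP hr hne hout (quad_swap₁₂ (quad_swap₂₃ hR)) h.1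
      (by simpa only [isSingle_comm_right] using h.2.1)
      (by simpa only [isSingle_comm_right] using h.2.2)
  · exact hS.mul_tau_le_of_star hP hr hne hout (quad_swap₁₂ (quad_swap₂₃ (quad_swap₃₄ hR)))
      (by simpa only [isSingle_comm_right] using h.1)
      (by simpa only [isSingle_comm_right] using h.2.1)
      (by simpa only [isSingle_comm_right] using h.2.2)
  · exact hS.mul_tau_le_of_triangle hP hr hR h.1 h.2.1 h.2.2 (fun h' => h₃ ⟨h', h.2.2⟩)
      (fun h' => h₂ ⟨h.2.1, h'⟩) (fun h' => h₁ ⟨h.1, h'⟩)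
  · exact hS.mul_tau_le_of_triangle hP hr (quad_swap₃₄ hR)
      (by simpa only [isSingle_comm_right] using h.1) h.2.1 h.2.2 (fun h' => h₂ ⟨h', h.2.2⟩)
      (fun h' => h₃ ⟨h.2.1, h'⟩)
      (fun h' => h₁ ⟨h.1, by simpa only [isSingle_comm_left] using h'⟩)
  · exact hS.mul_tau_le_of_triangle hP hr (quad_swap₃₄ (quad_swap₂₃ hR))
      (by simpa only [isSingle_comm_right] using h.1)
      (by simpa only [isSingle_comm_right] using h.2.1) h.2.2 (fun h' => h₁ ⟨h', h.2.2⟩)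
      (fun h' => h₃ ⟨h.2.1, by simpa only [isSingle_comm_left] using h'⟩)
      (fun h' => h₂ ⟨h.1, by simpa only [isSingle_comm_left] using h'⟩)
  · exact hS.mul_tau_le_of_triangle hP hr (quad_swap₃₄ (quad_swap₂₃ (quad_swap₁₂ hR)))
      (by simpa only [isSingle_comm_right] using h.1)
      (by simpa only [isSingle_comm_right] using h.2.1)
      (by simpa only [isSingle_comm_right] using h.2.2)
      (fun h' => h₁ ⟨by simpa only [isSingle_comm_left] using h', h.2.2⟩)
      (fun h' => h₂ ⟨by simpa only [isSingle_comm_left] using h', h.2.1⟩)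
      (fun h' => h₃ ⟨by simpa only [isSingle_comm_left] using h', h.1⟩)

theorem mul_tau_le (hne : ∀ ℓ ∈ L, ℓ.Nonempty) (hout : (L \ R).Nonempty) :
    (r + 1) * tau P L ≤ #P + #L := by
  obtain ⟨A, B, C, D, -, -, -, -, -, -, hR⟩ := card_eq_four.1 hS.card_eq
  by_cases h₁ : (∃ t ∈ L \ R, IsSingle A B C D t) ∧ ∃ t ∈ L \ R, IsSingle C D A B t
  · exact hS.mul_tau_le_of_opposite_singles hP hr hR h₁.1 h₁.2
  by_cases h₂ : (∃ t ∈ L \ R, IsSingle A C B D t) ∧ ∃ t ∈ L \ R, IsSingle B D A C t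
  · exact hS.mul_tau_le_of_opposite_singles hP hr (quad_swap₂₃ hR) h₂.1 h₂.2
  by_cases h₃ : (∃ t ∈ L \ R, IsSingle A D B C t) ∧ ∃ t ∈ L \ R, IsSingle B C A D t
  · exact hS.mul_tau_le_of_opposite_singles hP hr (quad_swap₂₃ (quad_swap₃₄ hR)) h₃.1 h₃.2
  exact hS.mul_tau_le_of_not_opposite_singles hP hr hne hout hR h₁ h₂ h₃

end

end FourPacking

end

theorem stmt12_general {α : Type*} [DecidableEq α] (P : Finset α) (L : Finset (Finset α))
    (r : ℕ) (hLS : IsLinearSystem P L)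
    (huniform : ∀ l ∈ L, l.card = r) (hL : nu2 L < L.card) (hν : nu2 L = 4) :
    (r + 1) * tau P L ≤ P.card + L.card := by
  obtain ⟨R, hR, hRcard⟩ := exists_is2Packing_card_eq_nu2 L
  have hS : FourPacking L R :=
    ⟨fun x hx y hy hxy => hLS.2.2 x hx y hy hxy, hR, hRcard.trans hν,
      fun S hS => hν ▸ card_le_nu2 hS⟩
  have hout : (L \ R).Nonempty := by
    rw [nonempty_iff_ne_empty, Ne, sdiff_eq_empty_iff_subset]
    intro h
    have := card_le_card h
    omega
  exact hS.mul_tau_le hLS.2.1 huniform hLS.1 hout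

/-- Any `r`-uniform linear system (`r ≥ 2`) with `|ℒ| > ν₂` and `ν₂ = 4`
satisfies `(r+1)·τ ≤ |P| + |ℒ|`. -/
theorem stmt12 {α : Type*} [DecidableEq α] (P : Finset α) (L : Finset (Finset α))
    (r : ℕ) (hr : 2 ≤ r) (hLS : IsLinearSystem P L)
    (huniform : ∀ l ∈ L, l.card = r) (hL : nu2 L < L.card) (hν : nu2 L = 4) :
    (r + 1) * tau P L ≤ P.card + L.card :=
  stmt12_general P L r hLS huniform hL hν
end

section
/- Let n ≥ 3 be odd and let C_{n,n+1} = (P_n, ℒ_n) be the linear system defined as follows: P_n = (ℤ_n × (ℤ_n ∖ {0})) ∪ {p, q}, where p and q are two additional points, and ℒ_n consists of the lines L_g = {(h, g) : h ∈ ℤ_n} for each g ∈ ℤ_n ∖ {0}, the lines l_{p_g} = {(g, h) : h ∈ ℤ_n ∖ {0}} ∪ {p} for each g ∈ ℤ_n, and the lines l_{q_g} = {(h, h+g) : h ∈ ℤ_n, h+g ≠ 0} ∪ {q} for each g ∈ ℤ_n. Then C_{n,n+1} is an n-uniform linear system and its transversal number and 2-packing number satisfy τ(C_{n,n+1}) =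 ν₂(C_{n,n+1}) = n + 1. -/
open Finset

/-- The point type of the linear system `C_{n,n+1}`: pairs in `ℤ_n × ℤ_n`
together with two extra points `p = Sum.inr 0` and `q = Sum.inr 1`. -/
abbrev CPt (n : ℕ) := (ZMod n × ZMod n) ⊕ Fin 2

/-- The point set `P_n = (ℤ_n × (ℤ_n \ {0})) ∪ {p, q}`. -/
def CPoints (n : ℕ) [NeZero n] : Finset (CPt n) :=
  ((Finset.univ.filter fun x : ZMod n × ZMod n => x.2 ≠ 0).image Sum.inl) ∪
    {Sum.inr 0, Sum.inr 1}

/-- The line `L_g = {(h, g) : h ∈ ℤ_n}`, for `g ≠ 0`. -/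
def Lg (n : ℕ) [NeZero n] (g : ZMod n) : Finset (CPt n) :=
  Finset.univ.image fun h : ZMod n => (Sum.inl (h, g) : CPt n)

/-- The line `l_{p_g} = {(g, h) : h ∈ ℤ_n \ {0}} ∪ {p}`. -/
def lineP (n : ℕ) [NeZero n] (g : ZMod n) : Finset (CPt n) :=
  ((Finset.univ.filter fun h : ZMod n => h ≠ 0).image fun h => (Sum.inl (g, h) : CPt n)) ∪
    {Sum.inr 0}

/-- The line `l_{q_g} = {(h, h + g) : h ∈ ℤ_n, h + g ≠ 0} ∪ {q}`. -/
def lineQ (n : ℕ) [NeZero n] (g : ZMod n) : Finset (CPt n) :=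
  ((Finset.univ.filter fun h : ZMod n => h + g ≠ 0).image fun h => (Sum.inl (h, h + g) : CPt n)) ∪
    {Sum.inr 1}

/-- The line set `ℒ_n = {L_g : g ≠ 0} ∪ {l_{p_g} : g ∈ ℤ_n} ∪ {l_{q_g} : g ∈ ℤ_n}`. -/
def CLines (n : ℕ) [NeZero n] : Finset (Finset (CPt n)) :=
  ((Finset.univ.filter fun g : ZMod n => g ≠ 0).image (Lg n)) ∪
    (Finset.univ.image (lineP n)) ∪ (Finset.univ.image (lineQ n))

/-!
Write a point of `ℤ_n × (ℤ_n ∖ {0})` as `(a, b)`: the lines are the rows `b = g`, the columns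
`a = x` (through `p`) and the diagonals `b - a = d` (through `q`).

A transversal avoiding `p` and `q` meets every row, column and diagonal. With only `n` points it
meets every column and every diagonal exactly once, so for odd `n` the second coordinates sum to
`∑ a + ∑ (b - a) = 0`; but `n` nonzero values covering all of `ℤ_n ∖ {0}` sum to the value taken
twice, which is nonzero.

A 2-packing contains at most two columns `X` and two diagonals `D`, and no row `g ∈ X + D`,
since `(x, x + d)` lies on `L_{x+d}`, `l_{p_x}` and `l_{q_d}`. The nontrivial subgroups of `ℤ_n`
have order at least `3`, so Cauchy–Davenport gives `|X + D| ≥ |X| + |D| - 1`.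

The bounds are attained by the column `{0} × (ℤ_n ∖ {0})` together with `p` and `q`, and by all
rows together with `l_{p_0}` and `l_{q_0}`.
-/

open scoped Pointwise

section LinearSystem

variable {α : Type*} [DecidableEq α]

lemma tau_eq_of_isTransversal {P : Finset α} {L : Finset (Finset α)} {T : Finset α} {k : ℕ}
    (hT : IsTransversal P L T) (hcard : #T = k)
    (hmin : ∀ T', IsTransversal P L T' → k ≤ #T') : tau P L = k :=
  IsLeast.csInf_eq ⟨⟨T, hT, hcard⟩, by rintro _ ⟨T', hT', rfl⟩; exact hmin T' hT'⟩

lemma nu2_eq_of_is2Packing {L R : Finset (Finset α)} {k : ℕ}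
    (hR : Is2Packing L R) (hcard : #R = k)
    (hmax : ∀ R', Is2Packing L R' → #R' ≤ k) : nu2 L = k :=
  IsGreatest.csSup_eq ⟨⟨R, hR, hcard⟩, by rintro _ ⟨R', hR', rfl⟩; exact hmax R' hR'⟩

lemma Is2Packing.card_filter_le_two {ι : Type*} {L R : Finset (Finset α)} (hR : Is2Packing L R)
    {s : Finset ι} {f : ι → Finset α} (hf : Function.Injective f) {a : α} (ha : ∀ i, a ∈ f i) :
    #(s.filter (f · ∈ R)) ≤ 2 := by
  by_contra! h
  obtain ⟨i, hi, j, hj, k, hk, hij, hik, hjk⟩ := two_lt_card.1 h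
  rw [mem_filter] at hi hj hk
  have := hR.2 _ hi.2 _ hj.2 _ hk.2 (hf.ne hij) (hf.ne hik) (hf.ne hjk)
  exact eq_empty_iff_forall_notMem.1 this a (by simp [ha])

lemma is2Packing_union {L A B : Finset (Finset α)} (hAL : A ⊆ L) (hBL : B ⊆ L)
    (hA : (A : Set (Finset α)).PairwiseDisjoint id)
    (hB : (B : Set (Finset α)).PairwiseDisjoint id) : Is2Packing L (A ∪ B) := by
  refine ⟨union_subset hAL hBL, fun l₁ h₁ l₂ h₂ l₃ h₃ h₁₂ h₁₃ h₂₃ => ?_⟩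
  have d₁₂ (h : Disjoint l₁ l₂) : l₁ ∩ l₂ ∩ l₃ = ∅ := by
    rw [disjoint_iff_inter_eq_empty.1 h, empty_inter]
  have d₁₃ (h : Disjoint l₁ l₃) : l₁ ∩ l₂ ∩ l₃ = ∅ := by
    rw [inter_right_comm, disjoint_iff_inter_eq_empty.1 h, empty_inter]
  have d₂₃ (h : Disjoint l₂ l₃) : l₁ ∩ l₂ ∩ l₃ = ∅ := by
    rw [inter_assoc, disjoint_iff_inter_eq_empty.1 h, inter_empty]
  rw [mem_union] at h₁ h₂ h₃
  -- by pigeonhole, two of the three lines come from the same family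
  rcases h₁ with h₁ | h₁ <;> rcases h₂ with h₂ | h₂ <;> rcases h₃ with h₃ | h₃ <;>
    first
    | exact d₁₂ (hA h₁ h₂ h₁₂) | exact d₁₂ (hB h₁ h₂ h₁₂)
    | exact d₁₃ (hA h₁ h₃ h₁₃) | exact d₁₃ (hB h₁ h₃ h₁₃)
    | exact d₂₃ (hA h₂ h₃ h₂₃) | exact d₂₃ (hB h₂ h₃ h₂₃)

end LinearSystem

lemma Finset.sum_eq_sum_of_image_eq {ι M : Type*} [DecidableEq M] [AddCommMonoid M]
    {s : Finset ι} {t : Finset M} {f : ι → M} (himg : s.image f = t) (hcard : #t = #s) :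
    ∑ x ∈ s, f x = ∑ y ∈ t, y := by
  subst himg
  rw [sum_image (card_image_iff.1 hcard)]

namespace ZMod

variable {n : ℕ}

lemma sum_univ_eq_zero_of_odd [NeZero n] (hodd : Odd n) : ∑ x : ZMod n, x = 0 := by
  have hneg : ∑ x : ZMod n, x = -∑ x : ZMod n, x := by
    rw [← sum_neg_distrib]
    exact Fintype.sum_equiv (Equiv.neg _) _ _ fun x => (neg_neg x).symm
  have h2 : IsUnit (2 : ZMod n) := by
    simpa using (unitOfCoprime 2 (Nat.coprime_two_left.2 hodd)).isUnit
  exact h2.mul_left_cancel (by linear_combination hneg)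

lemma three_le_addMinOrder_of_odd [NeZero n] (hodd : Odd n) :
    3 ≤ AddMonoid.minOrder (ZMod n) := by
  refine AddMonoid.le_minOrder.2 fun a ha _ => ?_
  have hdvd : addOrderOf a ∣ n := by simpa using addOrderOf_dvd_card (x := a)
  have hne : addOrderOf a ≠ 1 := fun h => ha (AddMonoid.addOrderOf_eq_one_iff.1 h)
  obtain ⟨k, hk⟩ := hodd.of_dvd_nat hdvd
  exact_mod_cast (show 3 ≤ addOrderOf a by omega)

lemma card_add_sub_one_le_card_add_of_odd [NeZero n] (hodd : Odd n) {s t : Finset (ZMod n)}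
    (hs : s.Nonempty) (ht : t.Nonempty) (hst : #s + #t ≤ 4) : #s + #t - 1 ≤ #(s + t) := by
  have hcd := cauchy_davenport_minOrder_add hs ht
  have hle : ((#s + #t - 1 : ℕ) : ℕ∞) ≤ AddMonoid.minOrder (ZMod n) :=
    le_trans (by exact_mod_cast (by omega : #s + #t - 1 ≤ 3)) (three_le_addMinOrder_of_odd hodd)
  rw [min_eq_right hle] at hcd
  exact_mod_cast hcd

end ZMod

lemma lt_card_of_image_fst_sub_snd {n : ℕ} [NeZero n] (hodd : Odd n)
    {G : Finset (ZMod n × ZMod n)} (hfst : G.image Prod.fst = univ)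
    (hsub : G.image (fun x => x.2 - x.1) = univ) (hsnd : G.image Prod.snd = univ.erase 0) :
    n < #G := by
  by_contra! hG
  have hcard : #G = n :=
    le_antisymm hG (by simpa [hfst] using card_image_le (s := G) (f := Prod.fst))
  have hsum_fst : ∑ x ∈ G, x.1 = 0 := by
    rw [sum_eq_sum_of_image_eq hfst (by simp [hcard]), ZMod.sum_univ_eq_zero_of_odd hodd]
  have hsum_sub : ∑ x ∈ G, (x.2 - x.1) = 0 := by
    rw [sum_eq_sum_of_image_eq hsub (by simp [hcard]), ZMod.sum_univ_eq_zero_of_odd hodd]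
  have hsum_snd : ∑ x ∈ G, x.2 = 0 := by
    rwa [sum_sub_distrib, hsum_fst, sub_zero] at hsum_sub
  have hmaps : ∀ x ∈ G, x.2 ∈ univ.erase (0 : ZMod n) := fun x hx => hsnd ▸ mem_image_of_mem _ hx
  obtain ⟨u, hu, v, hv, huv, huv₂⟩ := exists_ne_map_eq_of_card_lt_of_maps_to
    (by simp [hcard, card_erase_of_mem, NeZero.pos n]) hmaps
  -- removing one of two points with the same second coordinate leaves a bijection onto `ℤ_n ∖ {0}`
  have himg : (G.erase u).image Prod.snd = univ.erase 0 := by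
    refine (image_subset_image (erase_subset u G)).trans_eq hsnd |>.antisymm fun g hg => ?_
    obtain ⟨x, hx, rfl⟩ := mem_image.1 (hsnd ▸ hg)
    by_cases hxu : x = u
    · exact mem_image.2 ⟨v, mem_erase.2 ⟨huv.symm, hv⟩, hxu ▸ huv₂.symm⟩
    · exact mem_image_of_mem _ (mem_erase.2 ⟨hxu, hx⟩)
  have hsum_erase : ∑ x ∈ G.erase u, x.2 = 0 := by
    rw [sum_eq_sum_of_image_eq himg (by simp [card_erase_of_mem hu, hcard]),
      sum_erase univ (f := fun x : ZMod n => x) rfl, ZMod.sum_univ_eq_zero_of_odd hodd]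
  have hu₂ : u.2 = 0 := by
    rwa [← add_sum_erase G _ hu, hsum_erase, add_zero] at hsum_snd
  exact (mem_erase.1 (hmaps u hu)).1 hu₂

section CSystem

variable {n : ℕ} [NeZero n] {a b g : ZMod n} {i : Fin 2}

@[simp] lemma inl_mem_Lg : (Sum.inl (a, b) : CPt n) ∈ Lg n g ↔ b = g := by
  simp [Lg, eq_comm]

@[simp] lemma inr_notMem_Lg : (Sum.inr i : CPt n) ∉ Lg n g := by
  simp [Lg]

@[simp] lemma inl_mem_lineP : (Sum.inl (a, b) : CPt n) ∈ lineP n g ↔ a = g ∧ b ≠ 0 := by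
  simp [lineP, and_comm, eq_comm]

@[simp] lemma inr_mem_lineP : (Sum.inr i : CPt n) ∈ lineP n g ↔ i = 0 := by
  simp [lineP]

@[simp] lemma inl_mem_lineQ : (Sum.inl (a, b) : CPt n) ∈ lineQ n g ↔ b = a + g ∧ b ≠ 0 := by
  aesop (add simp lineQ)

@[simp] lemma inr_mem_lineQ : (Sum.inr i : CPt n) ∈ lineQ n g ↔ i = 1 := by
  simp [lineQ]

@[simp] lemma inl_mem_CPoints : (Sum.inl (a, b) : CPt n) ∈ CPoints n ↔ b ≠ 0 := by
  simp [CPoints]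

@[simp] lemma inr_mem_CPoints : (Sum.inr i : CPt n) ∈ CPoints n := by
  fin_cases i <;> simp [CPoints]

lemma mem_CLines {l : Finset (CPt n)} :
    l ∈ CLines n ↔ (∃ g ≠ 0, Lg n g = l) ∨ (∃ g, lineP n g = l) ∨ ∃ g, lineQ n g = l := by
  simp [CLines]

lemma Lg_mem_CLines (hg : g ≠ 0) : Lg n g ∈ CLines n := mem_CLines.2 (.inl ⟨g, hg, rfl⟩)

lemma lineP_mem_CLines (g : ZMod n) : lineP n g ∈ CLines n := mem_CLines.2 (.inr (.inl ⟨g, rfl⟩))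

lemma lineQ_mem_CLines (g : ZMod n) : lineQ n g ∈ CLines n := mem_CLines.2 (.inr (.inr ⟨g, rfl⟩))

lemma card_Lg (g : ZMod n) : #(Lg n g) = n := by
  rw [Lg, card_image_of_injective _ fun a b h => by simpa using h, card_univ, ZMod.card]

lemma card_lineP (g : ZMod n) : #(lineP n g) = n := by
  rw [lineP, card_union_of_disjoint (by simp),
    card_image_of_injective _ fun a b h => by simpa using h, filter_ne', card_erase_of_mem
      (mem_univ _), card_univ, ZMod.card, card_singleton, Nat.sub_add_cancel NeZero.one_le]

lemma card_lineQ (g : ZMod n) : #(lineQ n g) = n := by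
  have hfilter : univ.filter (fun h : ZMod n => h + g ≠ 0) = univ.erase (-g) := by
    ext x; simp [eq_neg_iff_add_eq_zero]
  rw [lineQ, card_union_of_disjoint (by simp),
    card_image_of_injective _ fun a b h => by simpa using h, hfilter, card_erase_of_mem
      (mem_univ _), card_univ, ZMod.card, card_singleton, Nat.sub_add_cancel NeZero.one_le]

lemma card_of_mem_CLines {l : Finset (CPt n)} (hl : l ∈ CLines n) : #l = n := by
  obtain ⟨g, -, rfl⟩ | ⟨g, rfl⟩ | ⟨g, rfl⟩ := mem_CLines.1 hl
  exacts [card_Lg g, card_lineP g, card_lineQ g]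

lemma subset_CPoints_of_mem_CLines {l : Finset (CPt n)} (hl : l ∈ CLines n) : l ⊆ CPoints n := by
  obtain ⟨g, hg, rfl⟩ | ⟨g, rfl⟩ | ⟨g, rfl⟩ := mem_CLines.1 hl <;>
    rintro (⟨a, b⟩ | i) h <;> simp at h ⊢ <;> grind

lemma card_inter_le_one_of_mem_CLines {l l' : Finset (CPt n)} (hl : l ∈ CLines n)
    (hl' : l' ∈ CLines n) (hne : l ≠ l') : #(l ∩ l') ≤ 1 := by
  refine card_le_one.2 fun x hx y hy => ?_
  obtain ⟨g, -, rfl⟩ | ⟨g, rfl⟩ | ⟨g, rfl⟩ := mem_CLines.1 hl <;>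
  obtain ⟨g', -, rfl⟩ | ⟨g', rfl⟩ | ⟨g', rfl⟩ := mem_CLines.1 hl' <;>
  rcases x with ⟨a, b⟩ | i <;> rcases y with ⟨c, d⟩ | j <;> simp_all <;> grind

lemma isLinearSystem_CLines : IsLinearSystem (CPoints n) (CLines n) :=
  ⟨fun _ hl => card_pos.1 ((card_of_mem_CLines hl).symm ▸ NeZero.pos n),
    fun _ => subset_CPoints_of_mem_CLines,
    fun _ hl _ hl' => card_inter_le_one_of_mem_CLines hl hl'⟩

end CSystem

section Transversal

variable {n : ℕ} [NeZero n] {T : Finset (CPt n)}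

lemma isTransversal_zero_column_pq :
    IsTransversal (CPoints n) (CLines n)
      ((univ.erase 0).image (fun g => Sum.inl (0, g)) ∪ {Sum.inr 0, Sum.inr 1}) := by
  refine ⟨fun x hx => ?_, fun l hl => ?_⟩
  · rcases x with ⟨a, b⟩ | i <;> simp at hx ⊢
    exact hx.1
  · obtain ⟨g, hg, rfl⟩ | ⟨g, rfl⟩ | ⟨g, rfl⟩ := mem_CLines.1 hl
    · exact ⟨Sum.inl (0, g), by simp [hg]⟩
    · exact ⟨Sum.inr 0, by simp⟩
    · exact ⟨Sum.inr 1, by simp⟩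

lemma card_zero_column_pq :
    #((univ.erase 0).image (fun g : ZMod n => (Sum.inl (0, g) : CPt n)) ∪
      {Sum.inr 0, Sum.inr 1}) = n + 1 := by
  rw [card_union_of_disjoint (by simp), card_image_of_injective _ fun a b h => by simpa using h,
    card_erase_of_mem (mem_univ _), card_univ, ZMod.card, card_pair (by simp)]
  have := NeZero.pos n
  omega

lemma IsTransversal.image_snd_toLeft (hT : IsTransversal (CPoints n) (CLines n) T) :
    T.toLeft.image Prod.snd = univ.erase 0 := by
  refine subset_antisymm (fun g hg => ?_) fun g hg => ?_
  · obtain ⟨⟨a, b⟩, hx, rfl⟩ := mem_image.1 hg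
    simpa using hT.1 (mem_toLeft.1 hx)
  · obtain ⟨(⟨a, b⟩ | i), hx⟩ := hT.2 _ (Lg_mem_CLines (mem_erase.1 hg).1) <;>
      simp only [mem_inter, inl_mem_Lg, inr_notMem_Lg, and_false] at hx
    exact mem_image.2 ⟨(a, b), mem_toLeft.2 hx.1, hx.2⟩

lemma IsTransversal.image_fst_toLeft (hT : IsTransversal (CPoints n) (CLines n) T)
    (hp : Sum.inr 0 ∉ T) : T.toLeft.image Prod.fst = univ := by
  refine eq_univ_of_forall fun g => ?_
  obtain ⟨(⟨a, b⟩ | i), hx⟩ := hT.2 _ (lineP_mem_CLines g) <;>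
    simp only [mem_inter, inl_mem_lineP, inr_mem_lineP] at hx
  · exact mem_image.2 ⟨(a, b), mem_toLeft.2 hx.1, hx.2.1⟩
  · exact absurd (hx.2 ▸ hx.1) hp

lemma IsTransversal.image_sub_toLeft (hT : IsTransversal (CPoints n) (CLines n) T)
    (hq : Sum.inr 1 ∉ T) : T.toLeft.image (fun x => x.2 - x.1) = univ := by
  refine eq_univ_of_forall fun g => ?_
  obtain ⟨(⟨a, b⟩ | i), hx⟩ := hT.2 _ (lineQ_mem_CLines g) <;>
    simp only [mem_inter, inl_mem_lineQ, inr_mem_lineQ] at hx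
  · exact mem_image.2 ⟨(a, b), mem_toLeft.2 hx.1, by simp [hx.2.1]⟩
  · exact absurd (hx.2 ▸ hx.1) hq

lemma IsTransversal.le_card (hodd : Odd n) (hT : IsTransversal (CPoints n) (CLines n) T) :
    n + 1 ≤ #T := by
  have hsplit := card_toLeft_add_card_toRight (u := T)
  have hsnd : n - 1 ≤ #T.toLeft := by
    simpa [hT.image_snd_toLeft, card_erase_of_mem] using
      card_image_le (s := T.toLeft) (f := Prod.snd)
  by_cases hp : Sum.inr 0 ∈ T <;> by_cases hq : Sum.inr 1 ∈ T
  · have : 2 ≤ #T.toRight :=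
      card_le_card (show {0, 1} ⊆ T.toRight by simp [insert_subset_iff, hp, hq])
    omega
  · have hsub : n ≤ #T.toLeft := by
      simpa [hT.image_sub_toLeft hq] using card_image_le (s := T.toLeft) (f := fun x => x.2 - x.1)
    have : 1 ≤ #T.toRight := card_pos.2 ⟨0, mem_toRight.2 hp⟩
    omega
  · have hfst : n ≤ #T.toLeft := by
      simpa [hT.image_fst_toLeft hp] using card_image_le (s := T.toLeft) (f := Prod.fst)
    have : 1 ≤ #T.toRight := card_pos.2 ⟨1, mem_toRight.2 hq⟩
    omega
  · have := lt_card_of_image_fst_sub_snd hodd (hT.image_fst_toLeft hp) (hT.image_sub_toLeft hq)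
      hT.image_snd_toLeft
    omega

lemma tau_CLines (hodd : Odd n) : tau (CPoints n) (CLines n) = n + 1 :=
  tau_eq_of_isTransversal isTransversal_zero_column_pq card_zero_column_pq
    fun _ hT => hT.le_card hodd

end Transversal

section Packing

variable {n : ℕ} [NeZero n] {g g' : ZMod n} {R : Finset (Finset (CPt n))}

lemma Lg_injective : Function.Injective (Lg n) := fun g g' h => by
  have : (Sum.inl (0, g) : CPt n) ∈ Lg n g' := h ▸ by simp
  simpa using this

lemma lineP_injective : Function.Injective (lineP n) := fun g g' h => by
  rcases subsingleton_or_nontrivial (ZMod n) with _ | _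
  · exact Subsingleton.elim g g'
  · have : (Sum.inl (g, 1) : CPt n) ∈ lineP n g' := h ▸ by simp
    exact (inl_mem_lineP.1 this).1

lemma lineQ_injective : Function.Injective (lineQ n) := fun g g' h => by
  rcases subsingleton_or_nontrivial (ZMod n) with _ | _
  · exact Subsingleton.elim g g'
  · have : (Sum.inl (1 - g, 1) : CPt n) ∈ lineQ n g' := h ▸ by simp
    linear_combination (inl_mem_lineQ.1 this).1

lemma Lg_ne_lineP : Lg n g ≠ lineP n g' := fun h => by
  have : (Sum.inr 0 : CPt n) ∈ Lg n g := h ▸ by simp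
  simp at this

lemma Lg_ne_lineQ : Lg n g ≠ lineQ n g' := fun h => by
  have : (Sum.inr 1 : CPt n) ∈ Lg n g := h ▸ by simp
  simp at this

lemma lineP_ne_lineQ : lineP n g ≠ lineQ n g' := fun h => by
  have : (Sum.inr 0 : CPt n) ∈ lineQ n g' := h ▸ by simp
  simp at this

lemma disjoint_Lg (h : g ≠ g') : Disjoint (Lg n g) (Lg n g') := by
  refine disjoint_left.2 fun x hx hx' => ?_
  rcases x with ⟨a, b⟩ | i <;> simp only [inl_mem_Lg, inr_notMem_Lg] at hx hx'
  exact h (hx.symm.trans hx')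

lemma disjoint_lineP_zero_lineQ_zero : Disjoint (lineP n 0) (lineQ n 0) := by
  refine disjoint_left.2 fun x hx hx' => ?_
  rcases x with ⟨a, b⟩ | i <;> simp only [inl_mem_lineP, inl_mem_lineQ, inr_mem_lineP,
    inr_mem_lineQ] at hx hx'
  · exact hx.2 (by rw [hx'.1, hx.1, add_zero])
  · exact absurd (hx.symm.trans hx') (by decide)

lemma is2Packing_rows_lineP_zero_lineQ_zero :
    Is2Packing (CLines n) ((univ.erase 0).image (Lg n) ∪ {lineP n 0, lineQ n 0}) := by
  refine is2Packing_union ?_ ?_ ?_ ?_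
  · exact image_subset_iff.2 fun g hg => Lg_mem_CLines (mem_erase.1 hg).1
  · simp [insert_subset_iff, lineP_mem_CLines, lineQ_mem_CLines]
  · rw [coe_image]
    exact Lg_injective.injOn.pairwiseDisjoint_image.2 fun g _ g' _ h => disjoint_Lg h
  · rw [coe_pair]
    exact Set.pairwise_pair.2 fun _ =>
      ⟨disjoint_lineP_zero_lineQ_zero, disjoint_lineP_zero_lineQ_zero.symm⟩

lemma card_rows_lineP_zero_lineQ_zero :
    #((univ.erase 0).image (Lg n) ∪ {lineP n 0, lineQ n 0}) = n + 1 := by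
  have hdisj : Disjoint ((univ.erase 0).image (Lg n)) {lineP n 0, lineQ n 0} := by
    simp [disjoint_left, Lg_ne_lineP, Lg_ne_lineQ]
  rw [card_union_of_disjoint hdisj, card_image_of_injective _ Lg_injective,
    card_erase_of_mem (mem_univ _), card_univ, ZMod.card, card_pair lineP_ne_lineQ]
  have := NeZero.pos n
  omega

lemma Is2Packing.disjoint_add (hR : Is2Packing (CLines n) R) :
    Disjoint ((univ.erase 0).filter (Lg n · ∈ R))
      (univ.filter (lineP n · ∈ R) + univ.filter (lineQ n · ∈ R)) := by
  refine disjoint_left.2 fun g hg hg' => ?_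
  obtain ⟨x, hx, d, hd, rfl⟩ := mem_add.1 hg'
  simp only [mem_filter, mem_erase] at hg hx hd
  have := hR.2 _ hg.2 _ hx.2 _ hd.2 Lg_ne_lineP Lg_ne_lineQ lineP_ne_lineQ
  exact eq_empty_iff_forall_notMem.1 this (Sum.inl (x, x + d)) (by simp [hg.1.1])

lemma Is2Packing.card_le (hodd : Odd n) (hR : Is2Packing (CLines n) R) : #R ≤ n + 1 := by
  set H := (univ.erase 0).filter (Lg n · ∈ R)
  set X := univ.filter (lineP n · ∈ R)
  set D := univ.filter (lineQ n · ∈ R)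
  have hsub : R ⊆ H.image (Lg n) ∪ X.image (lineP n) ∪ D.image (lineQ n) := fun l hl => by
    obtain ⟨g, hg, rfl⟩ | ⟨g, rfl⟩ | ⟨g, rfl⟩ := mem_CLines.1 (hR.1 hl)
    · exact mem_union_left _ (mem_union_left _ (mem_image_of_mem _ (by simp [H, hg, hl])))
    · exact mem_union_left _ (mem_union_right _ (mem_image_of_mem _ (by simp [X, hl])))
    · exact mem_union_right _ (mem_image_of_mem _ (by simp [D, hl]))
  have hR_le : #R ≤ #H + #X + #D := calc
    #R ≤ #(H.image (Lg n) ∪ X.image (lineP n)) + #(D.image (lineQ n)) :=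
      (card_le_card hsub).trans (card_union_le _ _)
    _ ≤ #(H.image (Lg n)) + #(X.image (lineP n)) + #(D.image (lineQ n)) := by
      gcongr; exact card_union_le _ _
    _ ≤ #H + #X + #D := by gcongr <;> exact card_image_le
  have hX : #X ≤ 2 := hR.card_filter_le_two lineP_injective (a := Sum.inr 0) fun _ => by simp
  have hD : #D ≤ 2 := hR.card_filter_le_two lineQ_injective (a := Sum.inr 1) fun _ => by simp
  have hH : #H < n := calc
    #H ≤ #(univ.erase (0 : ZMod n)) := card_le_card (filter_subset _ _)
    _ < n := by simpa using NeZero.pos n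
  have hHXD : #H + #(X + D) ≤ n := by
    rw [← card_union_of_disjoint hR.disjoint_add]
    simpa using card_le_card (subset_univ (H ∪ (X + D)))
  rcases X.eq_empty_or_nonempty with hX₀ | hXne
  · rw [hX₀, card_empty] at hR_le
    omega
  rcases D.eq_empty_or_nonempty with hD₀ | hDne
  · rw [hD₀, card_empty] at hR_le
    omega
  have := ZMod.card_add_sub_one_le_card_add_of_odd hodd hXne hDne (by omega)
  omega

lemma nu2_CLines (hodd : Odd n) : nu2 (CLines n) = n + 1 :=
  nu2_eq_of_is2Packing is2Packing_rows_lineP_zero_lineQ_zero card_rows_lineP_zero_lineQ_zero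
    fun _ hR => hR.card_le hodd

end Packing

theorem stmt18_general (n : ℕ) [NeZero n] (hodd : Odd n) :
    IsLinearSystem (CPoints n) (CLines n) ∧
      (∀ l ∈ CLines n, l.card = n) ∧
      tau (CPoints n) (CLines n) = n + 1 ∧
      nu2 (CLines n) = n + 1 :=
  ⟨isLinearSystem_CLines, fun _ => card_of_mem_CLines, tau_CLines hodd, nu2_CLines hodd⟩

/-- For odd `n ≥ 3`, the system `C_{n,n+1} = (P_n, ℒ_n)` is an
`n`-uniform linear system with `τ(C_{n,n+1}) = ν₂(C_{n,n+1}) = n + 1`. -/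
theorem stmt18 (n : ℕ) [NeZero n] (hn : 3 ≤ n) (hodd : Odd n) :
    IsLinearSystem (CPoints n) (CLines n) ∧
      (∀ l ∈ CLines n, l.card = n) ∧
      tau (CPoints n) (CLines n) = n + 1 ∧
      nu2 (CLines n) = n + 1 :=
  stmt18_general n hodd
end
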